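/- arXiv:1805.01065 — 10 statements merged into one kernel-verified Lean document; each statement's English description precedes it below -/
import Mathlib

section
/- Let R be a commutative ring, N ≥ 1, L ∈ R^{N×N}, γ₁, γ₂ ∈ R, and let F = [[I_N, I_N], [−γ₁L, I_N − γ₂L]] ∈ R^{2N×2N}. Then for every λ ∈ R, det(λ·I_{2N} − F) = det((λ − 1)²·I_N + ((λ − 1)γ₂ + γ₁)·L). In particular, λ = 1 is a root of the characteristic polynomial of F with multiplicity at least twice the multiplicity of 0 as a root of the characteristic polynomial of L. -/
open Matrix Polynomial

section Aux

variable {S : Type*} [CommRing S]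

private lemma coeff_comp_C_mul_X (p : S[X]) (b : S) (j : ℕ) :
    (p.comp (C b * X)).coeff j = p.coeff j * b ^ j := by
  rw [Polynomial.comp, eval₂_eq_sum, Polynomial.sum_def, finset_sum_coeff]
  rw [Finset.sum_eq_single j]
  · rw [mul_pow, ← C_pow, ← mul_assoc, ← C_mul, coeff_C_mul, coeff_X_pow, if_pos rfl, mul_one]
  · intro n _ hn
    rw [mul_pow, ← C_pow, ← mul_assoc, ← C_mul, coeff_C_mul, coeff_X_pow,
      if_neg (fun h => hn h.symm), mul_zero]
  · intro hj
    rw [Polynomial.notMem_support_iff.mp hj, map_zero, zero_mul, coeff_zero]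

private lemma eval_charpoly' {n : ℕ} (M : Matrix (Fin n) (Fin n) S) (s : S) :
    (M.charpoly).eval s = Matrix.det (s • (1 : Matrix (Fin n) (Fin n) S) - M) := by
  rw [Matrix.charpoly, ← coe_evalRingHom, RingHom.map_det]
  congr 1
  ext i j
  by_cases h : i = j <;>
    simp [h, charmatrix_apply, Matrix.diagonal_apply, Matrix.one_apply, Matrix.map_apply]

private lemma X_pow_dvd_charpoly_smul {n : ℕ} (M : Matrix (Fin n) (Fin n) S) (b : S) (k : ℕ)
    (h : (X : S[X]) ^ k ∣ M.charpoly) : (X : S[X]) ^ k ∣ (b • M).charpoly := by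
  set T := S[X]
  set M' : Matrix (Fin n) (Fin n) T := M.map (C : S → T) with hM'def
  have hM' : (X : T[X]) ^ k ∣ M'.charpoly := by
    rw [hM'def, Matrix.charpoly_map]
    have := Polynomial.map_dvd (C : S →+* T) h
    simpa using this
  -- key composition identity
  have key : ((X : T) • M').charpoly.comp (C (X : T) * X) = C ((X : T) ^ n) * M'.charpoly := by
    have hcomp : ((X : T) • M').charpoly.comp (C (X : T) * X)
        = eval₂RingHom (C : T →+* T[X]) (C (X : T) * X) ((X : T) • M').charpoly := rfl
    rw [hcomp, Matrix.charpoly, RingHom.map_det, RingHom.mapMatrix_apply]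
    have hmat : (charmatrix ((X : T) • M')).map (eval₂RingHom (C : T →+* T[X]) (C (X : T) * X))
        = C (X : T) • charmatrix M' := by
      ext i j : 2
      by_cases hij : i = j
      · subst hij
        simp only [Matrix.map_apply, Matrix.smul_apply, smul_eq_mul, charmatrix_apply_eq,
          coe_eval₂RingHom, eval₂_sub, eval₂_add, eval₂_neg, eval₂_mul, eval₂_X, eval₂_C, C_mul]
        ring
      · simp only [Matrix.map_apply, Matrix.smul_apply, smul_eq_mul,
          charmatrix_apply_ne _ _ _ hij, coe_eval₂RingHom, eval₂_sub, eval₂_add, eval₂_neg,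
          eval₂_mul, eval₂_X, eval₂_C, C_mul]
        ring
    rw [hmat, Matrix.det_smul, ← C_pow, Matrix.charpoly]
    simp
  have hcoeff : ∀ j < k, ((X : T) • M').charpoly.coeff j = 0 := by
    intro j hj
    have h1 : ((X : T) • M').charpoly.coeff j * (X : T) ^ j = 0 := by
      have h2 := congrArg (fun p => p.coeff j) key
      simp only [coeff_comp_C_mul_X, coeff_C_mul] at h2
      rw [h2, X_pow_dvd_iff.mp hM' j hj, mul_zero]
    set c := ((X : T) • M').charpoly.coeff j with hc
    have : ∀ m, c.coeff m = 0 := by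
      intro m
      rw [← Polynomial.coeff_mul_X_pow c j m, h1, coeff_zero]
    exact Polynomial.ext fun m => by rw [this m, coeff_zero]
  have hdvd : (X : T[X]) ^ k ∣ ((X : T) • M').charpoly := X_pow_dvd_iff.mpr hcoeff
  -- specialize X ↦ b
  have hmap : ((X : T) • M').map (evalRingHom b) = b • M := by
    ext i j
    simp only [hM'def, Matrix.map_apply, Matrix.smul_apply, smul_eq_mul, coe_evalRingHom,
      eval_mul, eval_X, eval_C]
  have h5 := Polynomial.map_dvd (evalRingHom b) hdvd
  rw [← Matrix.charpoly_map, hmap] at h5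
  simpa using h5

private lemma key_det {N : ℕ} (L : Matrix (Fin N) (Fin N) S) (g₁ g₂ lam : S) :
    Matrix.det (lam • (1 : Matrix (Fin N ⊕ Fin N) (Fin N ⊕ Fin N) S)
        - Matrix.fromBlocks 1 1 (-(g₁ • L)) (1 - g₂ • L))
      = Matrix.det ((lam - 1) ^ 2 • (1 : Matrix (Fin N) (Fin N) S)
          + ((lam - 1) * g₂ + g₁) • L) := by
  set A := (lam - 1) • (1 : Matrix (Fin N) (Fin N) S) with hA
  set D := (lam - 1) • (1 : Matrix (Fin N) (Fin N) S) + g₂ • L with hD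
  have hM : lam • (1 : Matrix (Fin N ⊕ Fin N) (Fin N ⊕ Fin N) S)
      - Matrix.fromBlocks 1 1 (-(g₁ • L)) (1 - g₂ • L)
      = Matrix.fromBlocks A (-1) (g₁ • L) D := by
    rw [← fromBlocks_one (l := Fin N) (m := Fin N), fromBlocks_smul]
    ext (i | i) (j | j) <;>
      simp [hA, hD, Matrix.sub_apply, Matrix.smul_apply, Matrix.add_apply, sub_smul,
        Matrix.one_apply] <;> ring
  rw [hM]
  have hdetU : Matrix.det (Matrix.fromBlocks (1 : Matrix (Fin N) (Fin N) S) 0 (A - 1) 1) = 1 := by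
    rw [det_fromBlocks_zero₁₂]
    simp
  have hU : Matrix.fromBlocks A (-1) (g₁ • L) D * Matrix.fromBlocks 1 0 (A - 1) 1
      = Matrix.fromBlocks 1 (-1) (g₁ • L + D * (A - 1)) D := by
    have e1 : A * 1 + (-1) * (A - 1) = (1 : Matrix (Fin N) (Fin N) S) := by noncomm_ring
    have e2 : A * 0 + (-1) * 1 = (-1 : Matrix (Fin N) (Fin N) S) := by noncomm_ring
    have e3 : (g₁ • L) * 1 + D * (A - 1) = g₁ • L + D * (A - 1) := by noncomm_ring
    have e4 : (g₁ • L) * 0 + D * 1 = D := by noncomm_ring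
    rw [fromBlocks_multiply, e1, e2, e3, e4]
  have hstep : Matrix.det (Matrix.fromBlocks A (-1) (g₁ • L) D)
      = Matrix.det (Matrix.fromBlocks 1 (-1) (g₁ • L + D * (A - 1)) D) := by
    rw [← hU, Matrix.det_mul, hdetU, mul_one]
  rw [hstep, det_fromBlocks_one₁₁]
  congr 1
  have h1 : D * (A - 1) = (lam - 1) • D - D := by
    rw [mul_sub, Matrix.mul_one, hA, Matrix.mul_smul, Matrix.mul_one]
  rw [h1, hD]
  ext i j
  simp [Matrix.add_apply, Matrix.sub_apply, Matrix.smul_apply, Matrix.neg_apply,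
    Matrix.one_apply, mul_ite]
  split <;> ring

end Aux

/-- the characteristic determinant identity
det(λI - F) = det((λ-1)²I + ((λ-1)γ₂ + γ₁)L) over any commutative ring, and the
resulting multiplicity bound: 1 is a root of charpoly F of multiplicity at
least twice the multiplicity of 0 as a root of charpoly L. -/
theorem stmt_3 (R : Type*) [CommRing R] (N : ℕ) (hN : 1 ≤ N)
    (L : Matrix (Fin N) (Fin N) R) (γ₁ γ₂ : R)
    (F : Matrix (Fin N ⊕ Fin N) (Fin N ⊕ Fin N) R)
    (hF : F = Matrix.fromBlocks 1 1 (-(γ₁ • L)) (1 - γ₂ • L)) :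
    (∀ lam : R,
      Matrix.det (lam • (1 : Matrix (Fin N ⊕ Fin N) (Fin N ⊕ Fin N) R) - F)
        = Matrix.det ((lam - 1) ^ 2 • (1 : Matrix (Fin N) (Fin N) R)
            + ((lam - 1) * γ₂ + γ₁) • L))
    ∧ 2 * Polynomial.rootMultiplicity (0 : R) L.charpoly
        ≤ Polynomial.rootMultiplicity (1 : R) F.charpoly := by
  constructor
  · intro lam
    rw [hF]
    exact key_det L γ₁ γ₂ lam
  · rcases subsingleton_or_nontrivial R with hR | hR
    · have h0 : L.charpoly = 0 := Subsingleton.elim _ _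
      rw [h0, rootMultiplicity_zero, mul_zero]
      exact Nat.zero_le _
    · set k := rootMultiplicity (0 : R) L.charpoly with hk
      have hdvdL : (X : R[X]) ^ k ∣ L.charpoly := by
        simpa using pow_rootMultiplicity_dvd L.charpoly 0
      -- charpoly F as a determinant over R[X]
      have hFc : F.charpoly
          = Matrix.det ((((X : R[X]) - 1) ^ 2) • (1 : Matrix (Fin N) (Fin N) R[X])
              + (((X : R[X]) - 1) * C γ₂ + C γ₁) • (L.map C)) := by
        rw [← key_det (L.map C) (C γ₁) (C γ₂) (X : R[X])]
        rw [Matrix.charpoly]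
        congr 1
        subst hF
        ext (i | i) (j | j) <;> by_cases hij : i = j <;>
          simp [hij, charmatrix_apply, Matrix.diagonal_apply, Matrix.one_apply,
            Matrix.smul_apply, Matrix.sub_apply, Matrix.map_apply, Matrix.neg_apply]
      -- divisibility over R[X]
      have hdvdL' : (X : (R[X])[X]) ^ k ∣ (L.map (C : R → R[X])).charpoly := by
        rw [Matrix.charpoly_map]
        have := Polynomial.map_dvd (C : R →+* R[X]) hdvdL
        simpa using this
      set c : R[X] := ((X : R[X]) - 1) * C γ₂ + C γ₁ with hc
      have hdvd2 : (X : (R[X])[X]) ^ k ∣ ((-c) • (L.map (C : R → R[X]))).charpoly :=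
        X_pow_dvd_charpoly_smul _ _ _ hdvdL'
      have hdvd3 : (((X : R[X]) - 1) ^ 2) ^ k
          ∣ Matrix.det ((((X : R[X]) - 1) ^ 2) • (1 : Matrix (Fin N) (Fin N) R[X])
              + c • (L.map C)) := by
        have h6 := _root_.map_dvd
          (evalRingHom (((X : R[X]) - 1) ^ 2) : (R[X])[X] →+* R[X]) hdvd2
        simp only [coe_evalRingHom, eval_pow, eval_X] at h6
        rwa [eval_charpoly', neg_smul, sub_neg_eq_add] at h6
      rw [← hFc] at hdvd3
      have hdvd4 : ((X : R[X]) - C 1) ^ (2 * k) ∣ F.charpoly := by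
        rw [C_1, pow_mul]
        exact hdvd3
      have hne : F.charpoly ≠ 0 := (Matrix.charpoly_monic F).ne_zero
      exact (le_rootMultiplicity_iff hne).mpr hdvd4
end

section
/- Let μ, γ₁, γ₂ ∈ ℝ with μ > 0, γ₂ > γ₁ > 0 and γ₁ − 2γ₂ > −4/μ. Then every complex root λ of the quadratic z² − (2 − γ₂μ)z + (1 + (γ₁ − γ₂)μ) satisfies |λ| < 1. -/
/-! The quadratic has real coefficients `p = 2 - γ₂μ` and `q = 1 + (γ₁ - γ₂)μ`, and the
hypotheses are exactly the Jury conditions `q < 1`, `1 - p + q > 0`, `1 + p + q > 0`.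
A non-real root comes with its conjugate, so `‖z‖² = q < 1`. A real root cannot lie
outside `(-1, 1)`, because the polynomial is positive at `±1` and its vertex `p / 2`
lies in `(-1, 1)`. -/

theorem abs_lt_one_of_sq_sub_mul_add_eq_zero {p q x : ℝ} (hq : q < 1) (hp : |p| < 1 + q)
    (hx : x ^ 2 - p * x + q = 0) : |x| < 1 := by
  rw [abs_lt] at hp ⊢
  constructor
  · by_contra! hle
    -- `x² - p x + q = (1 + p + q) + (x + 1)(x - 1 + p)`
    nlinarith [mul_nonneg_of_nonpos_of_nonpos (by linarith : x + 1 ≤ 0)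
      (by linarith : x - 1 + p ≤ 0)]
  · by_contra! hle
    -- `x² - p x + q = (1 - p + q) + (x - 1)(x + 1 - p)`
    nlinarith [mul_nonneg (by linarith : 0 ≤ x - 1) (by linarith : 0 ≤ x + 1 - p)]

theorem Complex.im_eq_zero_or_normSq_eq_of_sq_sub_mul_add_eq_zero {p q : ℝ} {z : ℂ}
    (hz : z ^ 2 - (p : ℂ) * z + (q : ℂ) = 0) : z.im = 0 ∨ Complex.normSq z = q := by
  have hre : z.re ^ 2 - z.im ^ 2 - p * z.re + q = 0 := by
    simpa [sq] using congrArg Complex.re hz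
  have him : z.im * (2 * z.re - p) = 0 := by
    have := congrArg Complex.im hz
    simp only [sq, Complex.sub_im, Complex.add_im, Complex.mul_im, Complex.ofReal_re,
      Complex.ofReal_im, Complex.zero_im] at this
    linarith
  refine (mul_eq_zero.mp him).imp id fun hvertex => ?_
  rw [Complex.normSq_apply]
  linear_combination (-1 : ℝ) * hre + z.re * hvertex

theorem Complex.norm_lt_one_of_sq_sub_mul_add_eq_zero {p q : ℝ} (hq : q < 1)
    (hp : |p| < 1 + q) {z : ℂ} (hz : z ^ 2 - (p : ℂ) * z + (q : ℂ) = 0) : ‖z‖ < 1 := by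
  rcases Complex.im_eq_zero_or_normSq_eq_of_sq_sub_mul_add_eq_zero hz with hreal | hnormSq
  · have hx : z.re ^ 2 - p * z.re + q = 0 := by
      simpa [sq, hreal] using congrArg Complex.re hz
    rw [← Complex.abs_re_eq_norm.mpr hreal]
    exact abs_lt_one_of_sq_sub_mul_add_eq_zero hq hp hx
  · rw [← sq_lt_one_iff₀ (norm_nonneg z), Complex.sq_norm, hnormSq]
    exact hq

/-- under the conditions γ₂ > γ₁ > 0 and γ₁ - 2γ₂ > -4/μ (μ > 0),
every complex root of z² - (2 - γ₂μ)z + (1 + (γ₁ - γ₂)μ) lies strictly inside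
the unit circle. -/
theorem stmt_4 (μ γ₁ γ₂ : ℝ) (hμ : 0 < μ) (h1 : 0 < γ₁) (h2 : γ₁ < γ₂)
    (h3 : γ₁ - 2 * γ₂ > -4 / μ) :
    ∀ lam : ℂ,
      lam ^ 2 - ((2 - γ₂ * μ : ℝ) : ℂ) * lam + ((1 + (γ₁ - γ₂) * μ : ℝ) : ℂ) = 0 →
      ‖lam‖ < 1 := by
  intro lam hroot
  have h3_mul : -4 < (γ₁ - 2 * γ₂) * μ := (div_lt_iff₀ hμ).mp h3
  refine Complex.norm_lt_one_of_sq_sub_mul_add_eq_zero ?_ ?_ hroot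
  · nlinarith
  · rw [abs_lt]
    constructor <;> nlinarith
end

section
/- Let L⁽⁰⁾ ∈ ℝ^{N×N} be the Laplacian of a connected undirected weighted graph (symmetric, nonpositive off-diagonal entries, L⁽⁰⁾·1_N = 0, with 0 a simple eigenvalue), and let γ₁, γ₂ ∈ ℝ satisfy γ₂ > γ₁ > 0 and γ₁ − 2γ₂ > −4/μ for every nonzero eigenvalue μ of L⁽⁰⁾. Then there exists δ_A > 0 with the following property: for every sequence of symmetric matrices L⁽ᵏ⁾ (k = 0, 1, 2, …) such that each L⁽ᵏ⁾ is the Laplacian of an undirected weighted graph with the same edge set as L⁽⁰⁾, each L⁽ᵏ⁾ is diagonalized by a common orthonormal eigenbasis of L⁽⁰⁾ (i.e. all L⁽ᵏ⁾ commute with L⁽⁰⁾ and with each other), and the corresponding adjacency matrices satisfy ‖A⁽ᵏ⁾ − A⁽⁰⁾‖_max < δ_A for all k ≥ 0, every solution of the time-varying system x^{(k+1)} = F⁽ᵏ⁾ x^{(k)}, F⁽ᵏ⁾ = [[I_N, I_N], [−γ₁L⁽ᵏ⁾, I_N − γ₂L⁽ᵏ⁾]], reaches consensus: p_i^{(k)}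 − p_j^{(k)} → 0 and v_i^{(k)} − v_j^{(k)} → 0 for all i, j. -/
open Filter Matrix Topology
open scoped Matrix.Norms.Operator

/-!
Project the state onto the disagreement subspace (mean-zero positions and velocities). There the
nominal closed-loop matrix has spectral radius `< 1`: on an eigenvector of `L⁽⁰⁾` with eigenvalue
`μ > 0` it acts as `[[1, 1], [-γ₁μ, 1 - γ₂μ]]`, whose characteristic polynomial passes Jury's test
exactly when `0 < γ₁ < γ₂` and `γ₁ - 2γ₂ > -4/μ`. By Gelfand's formula some power of it is a
contraction, and contraction of `n`-fold products survives perturbations of each factor that are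
small in operator norm; those are controlled by the entrywise bound on the adjacency matrices,
since Laplacian rows sum to zero. Hence the projected state tends to zero, which is consensus.
-/

theorem Complex.norm_lt_one_of_sq_sub_mul_add_eq_zero_s5 {a b : ℝ} {z : ℂ}
    (hz : z ^ 2 - a * z + b = 0) (hb : b < 1) (h₁ : 0 < 1 - a + b) (h₂ : 0 < 1 + a + b) :
    ‖z‖ < 1 := by
  have hre : z.re ^ 2 - z.im ^ 2 - a * z.re + b = 0 := by
    simpa [sq] using congrArg Complex.re hz
  have him : z.im * (2 * z.re - a) = 0 := by
    have := congrArg Complex.im hz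
    simp only [sq, Complex.sub_im, Complex.add_im, Complex.mul_im, Complex.ofReal_re,
      Complex.ofReal_im, zero_mul, add_zero, Complex.zero_im] at this
    linear_combination this
  suffices z.re ^ 2 + z.im ^ 2 < 1 by
    rw [← Complex.normSq_add_mul_I z.re z.im, Complex.re_add_im, ← Complex.sq_norm] at this
    exact (pow_lt_one_iff_of_nonneg (norm_nonneg z) two_ne_zero).mp this
  rcases mul_eq_zero.mp him with h | h
  · rw [h] at hre ⊢
    have h₃ : (z.re - 1) * (z.re + 1 - a) < 0 := by nlinarith
    have h₄ : (z.re + 1) * (z.re - 1 - a) < 0 := by nlinarith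
    have hlt : z.re < 1 := by by_contra! hx; nlinarith
    have hgt : -1 < z.re := by by_contra! hx; nlinarith
    nlinarith
  · nlinarith

theorem Complex.norm_lt_one_of_sq_add_mul_eq_zero {γ₁ γ₂ μ : ℝ} (hγ₁ : 0 < γ₁) (hγ₁₂ : γ₁ < γ₂)
    (hμ0 : μ ≠ 0) (hμ : γ₁ - 2 * γ₂ > -4 / μ) {z : ℂ}
    (hz : (z - 1) ^ 2 + (γ₁ + γ₂ * (z - 1)) * μ = 0) : ‖z‖ < 1 := by
  have hμpos : 0 < μ := by
    by_contra! hneg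
    have : 0 < -4 / μ := div_pos_of_neg_of_neg (by norm_num) (lt_of_le_of_ne hneg hμ0)
    linarith
  have hjury : 0 < 4 + μ * (γ₁ - 2 * γ₂) := by
    have := (div_lt_iff₀ hμpos).mp hμ
    linarith
  refine norm_lt_one_of_sq_sub_mul_add_eq_zero_s5 (a := 2 - γ₂ * μ) (b := 1 - γ₂ * μ + γ₁ * μ)
    (by push_cast; linear_combination hz) (by nlinarith) (by nlinarith) (by linarith)

section StateTransition

def stateTransition {R : Type*} [Monoid R] (G : ℕ → R) : ℕ → R
  | 0 => 1
  | t + 1 => G t * stateTransition G t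

theorem stateTransition_add {R : Type*} [Monoid R] (G : ℕ → R) (s t : ℕ) :
    stateTransition G (s + t) = stateTransition (fun k => G (s + k)) t * stateTransition G s := by
  induction t with
  | zero => simp [stateTransition]
  | succ t ih => rw [← add_assoc, stateTransition, ih, stateTransition, mul_assoc]

variable {R : Type*} [NormedRing R] [NormOneClass R]

theorem norm_stateTransition_le {G : ℕ → R} {B : ℝ} (hB : ∀ k, ‖G k‖ ≤ B) (t : ℕ) :
    ‖stateTransition G t‖ ≤ B ^ t := by
  induction t with
  | zero => simp [stateTransition]
  | succ t ih =>
    rw [stateTransition, pow_succ']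
    exact (norm_mul_le _ _).trans
      (mul_le_mul (hB t) ih (norm_nonneg _) ((norm_nonneg _).trans (hB t)))

theorem norm_stateTransition_sub_pow_le {G : ℕ → R} {A : R} {η : ℝ} (hη : 0 ≤ η)
    (hG : ∀ k, ‖G k - A‖ ≤ η) (t : ℕ) :
    ‖stateTransition G t - A ^ t‖ ≤ (‖A‖ + η) ^ t - ‖A‖ ^ t := by
  have hB : ∀ k, ‖G k‖ ≤ ‖A‖ + η := fun k => by
    simpa using (norm_add_le (G k - A) A).trans (by linarith [hG k])
  induction t with
  | zero => simp [stateTransition]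
  | succ t ih =>
    have hsplit : stateTransition G (t + 1) - A ^ (t + 1)
        = (G t - A) * stateTransition G t + A * (stateTransition G t - A ^ t) := by
      rw [stateTransition, pow_succ']; noncomm_ring
    calc ‖stateTransition G (t + 1) - A ^ (t + 1)‖
        ≤ ‖G t - A‖ * ‖stateTransition G t‖ + ‖A‖ * ‖stateTransition G t - A ^ t‖ := by
          rw [hsplit]
          exact (norm_add_le _ _).trans (add_le_add (norm_mul_le _ _) (norm_mul_le _ _))
      _ ≤ η * (‖A‖ + η) ^ t + ‖A‖ * ((‖A‖ + η) ^ t - ‖A‖ ^ t) := by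
          gcongr
          · exact hG t
          · exact norm_stateTransition_le hB t
      _ = (‖A‖ + η) ^ (t + 1) - ‖A‖ ^ (t + 1) := by ring

theorem tendsto_stateTransition_zero {G : ℕ → R} {n : ℕ} (hn : n ≠ 0) {B ρ : ℝ}
    (hB : ∀ k, ‖G k‖ ≤ B) (hρ : ρ < 1)
    (hblock : ∀ s, ‖stateTransition (fun k => G (s + k)) n‖ ≤ ρ) :
    Tendsto (stateTransition G) atTop (𝓝 0) := by
  have hρ0 : 0 ≤ ρ := (norm_nonneg _).trans (hblock 0)
  have hblocks : ∀ q, ‖stateTransition G (q * n)‖ ≤ ρ ^ q := by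
    intro q
    induction q with
    | zero => simp [stateTransition]
    | succ q ih =>
      rw [Nat.succ_mul, stateTransition_add, pow_succ']
      exact (norm_mul_le _ _).trans (mul_le_mul (hblock _) ih (norm_nonneg _) hρ0)
  have hbound : ∀ t, ‖stateTransition G t‖ ≤ max B 1 ^ n * ρ ^ (t / n) := by
    intro t
    obtain ⟨q, r, hr, rfl⟩ : ∃ q r, r < n ∧ t = q * n + r :=
      ⟨t / n, t % n, Nat.mod_lt _ (Nat.pos_of_ne_zero hn), (Nat.div_add_mod' t n).symm⟩
    have hq : (q * n + r) / n = q := by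
      rw [add_comm, Nat.add_mul_div_right _ _ (Nat.pos_of_ne_zero hn), Nat.div_eq_of_lt hr,
        zero_add]
    rw [stateTransition_add, hq]
    refine (norm_mul_le _ _).trans (mul_le_mul ?_ (hblocks _) (norm_nonneg _) (by positivity))
    calc _ ≤ max B 1 ^ r := norm_stateTransition_le (fun k => (hB _).trans (le_max_left _ _)) _
      _ ≤ max B 1 ^ n := pow_le_pow_right₀ (le_max_right _ _) hr.le
  refine squeeze_zero_norm hbound ?_
  simpa using ((tendsto_pow_atTop_nhds_zero_of_lt_one hρ0 hρ).comp
    (Nat.tendsto_div_const_atTop hn)).const_mul (max B 1 ^ n)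

theorem exists_forall_tendsto_stateTransition_zero {A : R} {n : ℕ} (hn : n ≠ 0)
    (hA : ‖A ^ n‖ < 1) :
    ∃ η > 0, ∀ G : ℕ → R, (∀ k, ‖G k - A‖ ≤ η) → Tendsto (stateTransition G) atTop (𝓝 0) := by
  have hcont : Tendsto (fun η : ℝ => (‖A‖ + η) ^ n - ‖A‖ ^ n) (𝓝[>] 0) (𝓝 0) := by
    have hc : Continuous fun η : ℝ => (‖A‖ + η) ^ n - ‖A‖ ^ n := by fun_prop
    simpa using (hc.tendsto 0).mono_left nhdsWithin_le_nhds
  obtain ⟨η, hgap, hη⟩ := ((hcont.eventually_lt_const (sub_pos.mpr hA)).and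
    self_mem_nhdsWithin).exists
  refine ⟨η, hη, fun G hG => ?_⟩
  refine tendsto_stateTransition_zero hn (B := ‖A‖ + η) (fun k => ?_)
    (add_lt_of_lt_sub_left hgap) (fun s => ?_)
  · simpa using (norm_add_le (G k - A) A).trans (by linarith [hG k])
  · calc _ ≤ ‖A ^ n‖ + ‖stateTransition (fun k => G (s + k)) n - A ^ n‖ := by
          simpa using norm_add_le (A ^ n) (stateTransition (fun k => G (s + k)) n - A ^ n)
      _ ≤ _ := by gcongr; exact norm_stateTransition_sub_pow_le hη.le (fun k => hG _) n

end StateTransition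

theorem Matrix.eq_stateTransition_mulVec {m K : Type*} [Fintype m] [DecidableEq m]
    [CommSemiring K] {G : ℕ → Matrix m m K} {y : ℕ → m → K}
    (hy : ∀ t, y (t + 1) = G t *ᵥ y t) (t : ℕ) : y t = stateTransition G t *ᵥ y 0 := by
  induction t with
  | zero => simp [stateTransition]
  | succ t ih => rw [hy, ih, stateTransition, mulVec_mulVec]

theorem spectrum.eventually_norm_pow_lt_one {A : Type*} [NormedRing A] [NormedAlgebra ℂ A]
    [CompleteSpace A] [Nontrivial A] {a : A} (h : ∀ z ∈ spectrum ℂ a, ‖z‖ < 1) :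
    ∀ᶠ k in atTop, ‖a ^ k‖ < 1 := by
  have hρ : spectralRadius ℂ a < 1 := by
    simpa using spectrum.spectralRadius_lt_of_forall_lt a (r := 1)
      fun z hz => by simpa [← NNReal.coe_lt_coe] using h z hz
  have hgelfand := spectrum.pow_nnnorm_pow_one_div_tendsto_nhds_spectralRadius a
  filter_upwards [hgelfand.eventually_lt_const hρ, eventually_gt_atTop 0] with k hk hk0
  by_contra! h1
  exact hk.not_ge (ENNReal.one_le_rpow (by exact_mod_cast h1) (by positivity))

section Norms

variable {m n : Type*} [Fintype m] [Fintype n]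

theorem Matrix.linfty_opNorm_le_of_sum_abs_le {A : Matrix m n ℝ} {c : ℝ} (hc : 0 ≤ c)
    (h : ∀ i, ∑ j, |A i j| ≤ c) : ‖A‖ ≤ c := by
  rw [linfty_opNorm_def, ← NNReal.coe_mk c hc, NNReal.coe_le_coe]
  exact Finset.sup_le fun i _ => by simpa [← NNReal.coe_le_coe] using h i

theorem Matrix.linfty_opNorm_map_ofReal_pow [DecidableEq n] (A : Matrix n n ℝ) (t : ℕ) :
    ‖A.map Complex.ofReal ^ t‖ = ‖A ^ t‖ := by
  rw [show A.map Complex.ofReal ^ t = (A ^ t).map Complex.ofReal from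
    (map_pow Complex.ofRealHom.mapMatrix A t).symm]
  simp [linfty_opNorm_def]

end Norms

section Eigenvectors

variable {n : Type*} [Fintype n]

theorem exists_real_common_eigenvector {A B : Matrix n n ℝ} {a b : ℝ} {p : n → ℂ} (hp : p ≠ 0)
    (hA : A.map Complex.ofReal *ᵥ p = (a : ℂ) • p) (hB : B.map Complex.ofReal *ᵥ p = (b : ℂ) • p) :
    ∃ w ≠ 0, A *ᵥ w = a • w ∧ B *ᵥ w = b • w := by
  have hparts : ∀ (M : Matrix n n ℝ) (c : ℝ), M.map Complex.ofReal *ᵥ p = (c : ℂ) • p →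
      M *ᵥ (fun i => (p i).re) = c • (fun i => (p i).re) ∧
        M *ᵥ (fun i => (p i).im) = c • (fun i => (p i).im) := by
    intro M c h
    constructor <;> ext i
    · simpa [mulVec, dotProduct, Complex.re_sum] using congrArg Complex.re (congrFun h i)
    · simpa [mulVec, dotProduct, Complex.im_sum] using congrArg Complex.im (congrFun h i)
  obtain ⟨hAre, hAim⟩ := hparts A a hA
  obtain ⟨hBre, hBim⟩ := hparts B b hB
  by_cases hre : (fun i => (p i).re) = 0
  · refine ⟨_, fun him => hp ?_, hAim, hBim⟩
    ext i
    exact Complex.ext (congrFun hre i) (congrFun him i)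
  · exact ⟨_, hre, hAre, hBre⟩

theorem Matrix.mulVec_eq_of_mul_self_of_commute {K : Type*} [Field K] {P F : Matrix n n K}
    (hP : P * P = P) (hPF : P * F = F * P) {lam : K} (hlam : lam ≠ 0) {v : n → K}
    (hv : (P * F) *ᵥ v = lam • v) : P *ᵥ v = v ∧ F *ᵥ v = lam • v := by
  have hPv : P *ᵥ v = v := by
    refine smul_right_injective _ hlam (?_ : lam • P *ᵥ v = lam • v)
    rw [← mulVec_smul, ← hv, mulVec_mulVec, ← mul_assoc, hP]
  refine ⟨hPv, ?_⟩
  rw [← hv, hPF, ← mulVec_mulVec, hPv]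

variable [DecidableEq n]

theorem Matrix.exists_mulVec_eq_smul_of_mem_spectrum {K : Type*} [Field K] {A : Matrix n n K}
    {μ : K} (h : μ ∈ spectrum K A) : ∃ v ≠ 0, A *ᵥ v = μ • v := by
  rw [← spectrum_toLin', ← Module.End.hasEigenvalue_iff_mem_spectrum] at h
  obtain ⟨v, hv, hv0⟩ := h.exists_hasEigenvector
  exact ⟨v, hv0, by simpa using Module.End.mem_eigenspace_iff.mp hv⟩

theorem Matrix.mem_spectrum_of_mulVec_eq_smul {K : Type*} [Field K] {A : Matrix n n K} {μ : K}
    {v : n → K} (hv : v ≠ 0) (h : A *ᵥ v = μ • v) : μ ∈ spectrum K A := by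
  rw [← spectrum_toLin']
  exact (Module.End.hasEigenvalue_of_hasEigenvector
    ⟨Module.End.mem_eigenspace_iff.mpr (by simpa using h), hv⟩).mem_spectrum

theorem Matrix.IsHermitian.im_eq_zero_of_mulVec_eq_smul {𝕜 : Type*} [RCLike 𝕜]
    {A : Matrix n n 𝕜} (hA : A.IsHermitian) {v : n → 𝕜} (hv : v ≠ 0) {μ : 𝕜}
    (h : A *ᵥ v = μ • v) : RCLike.im μ = 0 := by
  refine RCLike.conj_eq_iff_im.mp ((isSymmetric_toEuclideanLin_iff.mpr hA).conj_eigenvalue_eq_self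
    (Module.End.hasEigenvalue_of_hasEigenvector (x := WithLp.toLp 2 v) ⟨?_, ?_⟩))
  · rw [Module.End.mem_eigenspace_iff]
    ext i
    simp [h]
  · simpa using hv

end Eigenvectors

section Consensus

variable {n : Type*} [DecidableEq n]

def consensusMatrix {K : Type*} [Ring K] (γ₁ γ₂ : K) (L : Matrix n n K) :
    Matrix (n ⊕ n) (n ⊕ n) K :=
  fromBlocks 1 1 (-(γ₁ • L)) (1 - γ₂ • L)

theorem consensusMatrix_map {K K' : Type*} [CommRing K] [CommRing K'] (f : K →+* K')
    (γ₁ γ₂ : K) (L : Matrix n n K) :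
    (consensusMatrix γ₁ γ₂ L).map f = consensusMatrix (f γ₁) (f γ₂) (L.map f) := by
  ext (i | i) (j | j) <;> simp [consensusMatrix, one_apply, apply_ite f]

variable [Fintype n]

theorem consensusMatrix_mulVec_eq_smul {K : Type*} [CommRing K] {γ₁ γ₂ lam : K}
    {L : Matrix n n K} {p q : n → K}
    (h : consensusMatrix γ₁ γ₂ L *ᵥ Sum.elim p q = lam • Sum.elim p q) :
    q = (lam - 1) • p ∧ (γ₁ + γ₂ * (lam - 1)) • (L *ᵥ p) = -(lam - 1) ^ 2 • p := by
  rw [consensusMatrix, fromBlocks_mulVec] at h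
  have hp : p + q = lam • p := funext fun i => by simpa using congrFun h (Sum.inl i)
  have hq : -(γ₁ • L *ᵥ p) + (q - γ₂ • L *ᵥ q) = lam • q := funext fun i => by
    simpa [neg_mulVec, sub_mulVec, smul_mulVec] using congrFun h (Sum.inr i)
  have hq' : q = (lam - 1) • p := by rw [sub_smul, one_smul, ← hp, add_sub_cancel_left]
  refine ⟨hq', ?_⟩
  rw [hq', mulVec_smul] at hq
  ext i
  have := congrFun hq i
  simp only [Pi.add_apply, Pi.neg_apply, Pi.sub_apply, Pi.smul_apply, smul_eq_mul] at this ⊢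
  linear_combination -this

theorem sum_abs_le_of_mulVec_one_eq_zero {M : Matrix n n ℝ} (hM : M *ᵥ (fun _ => 1) = 0)
    {δ : ℝ} (hδ : 0 ≤ δ) (h : ∀ i j, i ≠ j → |M i j| ≤ δ) (i : n) :
    ∑ j, |M i j| ≤ 2 * Fintype.card n * δ := by
  have hoff : ∑ j ∈ Finset.univ.erase i, |M i j| ≤ Fintype.card n * δ := by
    calc _ ≤ (Finset.univ.erase i).card • δ :=
          Finset.sum_le_card_nsmul _ _ _ fun j hj => h i j (Finset.ne_of_mem_erase hj).symm
      _ ≤ Fintype.card n * δ := by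
          rw [nsmul_eq_mul]
          gcongr
          exact_mod_cast Finset.card_erase_le
  have hdiag : |M i i| ≤ ∑ j ∈ Finset.univ.erase i, |M i j| := by
    have hrow : M i i + ∑ j ∈ Finset.univ.erase i, M i j = 0 := by
      rw [Finset.add_sum_erase _ _ (Finset.mem_univ i)]
      simpa [mulVec, dotProduct] using congrFun hM i
    rw [eq_neg_of_add_eq_zero_left hrow, abs_neg]
    exact Finset.abs_sum_le_sum_abs _ _
  rw [← Finset.add_sum_erase _ _ (Finset.mem_univ i)]
  linarith

theorem norm_consensusMatrix_sub_le (γ₁ γ₂ : ℝ) {L L' : Matrix n n ℝ} {c : ℝ} (hc : 0 ≤ c)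
    (h : ∀ i, ∑ j, |(L - L') i j| ≤ c) :
    ‖consensusMatrix γ₁ γ₂ L - consensusMatrix γ₁ γ₂ L'‖ ≤ (|γ₁| + |γ₂|) * c := by
  have hsub : consensusMatrix γ₁ γ₂ L - consensusMatrix γ₁ γ₂ L'
      = fromBlocks 0 0 (-(γ₁ • (L - L'))) (-(γ₂ • (L - L'))) := by
    ext (i | i) (j | j) <;> simp [consensusMatrix] <;> ring
  rw [hsub]
  refine linfty_opNorm_le_of_sum_abs_le (by positivity) fun i => ?_
  rcases i with i | i
  · simpa using by positivity
  · simp only [Fintype.sum_sum_type, fromBlocks_apply₂₁, fromBlocks_apply₂₂, Matrix.neg_apply,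
      Matrix.smul_apply, Matrix.sub_apply, smul_eq_mul, abs_neg, abs_mul, ← Finset.mul_sum,
      add_mul]
    gcongr <;> exact h i

variable (n) in
noncomputable def centering : Matrix n n ℝ := 1 - (Fintype.card n : ℝ)⁻¹ • of fun _ _ => 1

theorem centering_mul {M : Matrix n n ℝ} (hM : (fun _ => 1) ᵥ* M = 0) :
    centering n * M = M := by
  have hJ : (of fun _ _ => (1 : ℝ) : Matrix n n ℝ) * M = 0 := by
    ext i j
    simpa [Matrix.mul_apply, vecMul, dotProduct] using congrFun hM j
  rw [centering, sub_mul, one_mul, smul_mul, hJ, smul_zero, sub_zero]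

theorem mul_centering {M : Matrix n n ℝ} (hM : M *ᵥ (fun _ => 1) = 0) :
    M * centering n = M := by
  have hJ : M * (of fun _ _ => (1 : ℝ) : Matrix n n ℝ) = 0 := by
    ext i j
    simpa [Matrix.mul_apply, mulVec, dotProduct] using congrFun hM i
  rw [centering, mul_sub, mul_one, Matrix.mul_smul, hJ, smul_zero, sub_zero]

theorem centering_mul_of_isSymm {M : Matrix n n ℝ} (hM : M.IsSymm)
    (hrow : M *ᵥ (fun _ => 1) = 0) : centering n * M = M :=
  centering_mul (by rw [← mulVec_transpose, hM.eq, hrow])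

theorem centering_mulVec_one : centering n *ᵥ (fun _ => 1) = 0 := by
  ext i
  have : Nonempty n := ⟨i⟩
  rw [centering, sub_mulVec, smul_mulVec, one_mulVec]
  simp [mulVec, dotProduct]

theorem centering_mul_self : centering n * centering n = centering n :=
  mul_centering centering_mulVec_one

theorem centering_mulVec_sub (p : n → ℝ) (i j : n) :
    (centering n *ᵥ p) i - (centering n *ᵥ p) j = p i - p j := by
  rw [centering, sub_mulVec, smul_mulVec, one_mulVec]
  simp [mulVec, dotProduct]

theorem eq_zero_of_mulVec_eq_zero_of_centering_mulVec [Nonempty n] {L : Matrix n n ℝ}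
    (hrow : L *ᵥ (fun _ => 1) = 0) (hker : Module.finrank ℝ (LinearMap.ker (toLin' L)) = 1)
    {w : n → ℝ} (hw : L *ᵥ w = 0) (hPw : centering n *ᵥ w = w) : w = 0 := by
  let one : LinearMap.ker (toLin' L) := ⟨fun _ => 1, by simpa using hrow⟩
  have hone : one ≠ 0 := fun h => by
    simpa [one] using congrFun (congrArg Subtype.val h) (Classical.arbitrary n)
  obtain ⟨c, hc⟩ := (finrank_eq_one_iff_of_nonzero' one hone).mp hker ⟨w, by simpa using hw⟩
  have hwc : w = c • fun _ => 1 := by simpa [one] using (congrArg Subtype.val hc).symm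
  rw [← hPw, hwc, mulVec_smul, centering_mulVec_one, smul_zero]

variable (n) in
noncomputable def blockCentering : Matrix (n ⊕ n) (n ⊕ n) ℝ :=
  fromBlocks (centering n) 0 0 (centering n)

theorem blockCentering_mulVec (x : n ⊕ n → ℝ) :
    blockCentering n *ᵥ x =
      Sum.elim (centering n *ᵥ (x ∘ Sum.inl)) (centering n *ᵥ (x ∘ Sum.inr)) := by
  rw [← Sum.elim_comp_inl_inr x, blockCentering, fromBlocks_mulVec]
  simp

theorem blockCentering_mul_self : blockCentering n * blockCentering n = blockCentering n := by
  simp [blockCentering, fromBlocks_multiply, centering_mul_self]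

theorem blockCentering_mul_consensusMatrix {γ₁ γ₂ : ℝ} {L : Matrix n n ℝ}
    (hL : centering n * L = L) (hL' : L * centering n = L) :
    blockCentering n * consensusMatrix γ₁ γ₂ L = consensusMatrix γ₁ γ₂ L * blockCentering n := by
  simp [blockCentering, consensusMatrix, fromBlocks_multiply, mul_sub, sub_mul, hL, hL']

theorem blockCentering_mul_consensusMatrix_sub {γ₁ γ₂ : ℝ} {L L' : Matrix n n ℝ}
    (hL : centering n * L = L) (hL' : centering n * L' = L') :
    blockCentering n * consensusMatrix γ₁ γ₂ L - blockCentering n * consensusMatrix γ₁ γ₂ L' =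
      consensusMatrix γ₁ γ₂ L - consensusMatrix γ₁ γ₂ L' := by
  simp only [blockCentering, consensusMatrix, fromBlocks_multiply]
  ext (i | i) (j | j) <;> simp [mul_sub, hL, hL']

theorem exists_eigenvector_of_mem_spectrum_blockCentering_mul_consensusMatrix
    {L : Matrix n n ℝ} (hsym : L.IsSymm) (hrow : L *ᵥ (fun _ => 1) = 0) {γ₁ γ₂ : ℝ} {z : ℂ}
    (hz0 : z ≠ 0)
    (hz : z ∈ spectrum ℂ ((blockCentering n * consensusMatrix γ₁ γ₂ L).map Complex.ofReal)) :
    ∃ p ≠ 0, (centering n).map Complex.ofReal *ᵥ p = ((1 : ℝ) : ℂ) • p ∧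
      ((γ₁ : ℂ) + γ₂ * (z - 1)) • (L.map Complex.ofReal *ᵥ p) = -(z - 1) ^ 2 • p := by
  have hmap : ∀ A B : Matrix (n ⊕ n) (n ⊕ n) ℝ,
      (A * B).map Complex.ofReal = A.map Complex.ofReal * B.map Complex.ofReal := fun A B =>
    Matrix.map_mul (f := Complex.ofRealHom)
  obtain ⟨v, hv0, hv⟩ := exists_mulVec_eq_smul_of_mem_spectrum hz
  rw [hmap] at hv
  obtain ⟨hPv, hFv⟩ := mulVec_eq_of_mul_self_of_commute
    (by rw [← hmap, blockCentering_mul_self])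
    (by rw [← hmap, ← hmap, blockCentering_mul_consensusMatrix
      (centering_mul_of_isSymm hsym hrow) (mul_centering hrow)]) hz0 hv
  rw [← Sum.elim_comp_inl_inr v] at hv0 hPv hFv
  rw [show (consensusMatrix γ₁ γ₂ L).map Complex.ofReal = _ from
    consensusMatrix_map Complex.ofRealHom γ₁ γ₂ L] at hFv
  obtain ⟨hq, hLp⟩ := consensusMatrix_mulVec_eq_smul hFv
  refine ⟨v ∘ Sum.inl, fun hp => hv0 ?_, ?_, hLp⟩
  · rw [hq, hp, smul_zero]
    exact Sum.elim_zero_zero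
  · ext i
    simpa [blockCentering, fromBlocks_map, fromBlocks_mulVec] using congrFun hPv (Sum.inl i)

theorem norm_lt_one_of_mem_spectrum_blockCentering_mul_consensusMatrix [Nonempty n]
    {L : Matrix n n ℝ} (hsym : L.IsSymm) (hrow : L *ᵥ (fun _ => 1) = 0)
    (hker : Module.finrank ℝ (LinearMap.ker (toLin' L)) = 1) {γ₁ γ₂ : ℝ} (hγ₁ : 0 < γ₁)
    (hγ₁₂ : γ₁ < γ₂) (hμ : ∀ μ ∈ spectrum ℝ L, μ ≠ 0 → γ₁ - 2 * γ₂ > -4 / μ) {z : ℂ}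
    (hz : z ∈ spectrum ℂ ((blockCentering n * consensusMatrix γ₁ γ₂ L).map Complex.ofReal)) :
    ‖z‖ < 1 := by
  rcases eq_or_ne z 0 with rfl | hz0
  · simp
  obtain ⟨p, hp0, hPp, hLp⟩ :=
    exists_eigenvector_of_mem_spectrum_blockCentering_mul_consensusMatrix hsym hrow hz0 hz
  have hc0 : (γ₁ : ℂ) + γ₂ * (z - 1) ≠ 0 := by
    intro hc
    rw [hc, zero_smul, eq_comm, smul_eq_zero] at hLp
    have hz1 : z = 1 := by simpa [sub_eq_zero] using hLp.resolve_right hp0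
    rw [hz1, sub_self, mul_zero, add_zero] at hc
    exact hγ₁.ne' (by exact_mod_cast hc)
  -- `z` is an eigenvalue of the `2 × 2` block `[[1, 1], [-γ₁μ, 1 - γ₂μ]]` for this `μ`.
  set μ : ℂ := -(z - 1) ^ 2 / (γ₁ + γ₂ * (z - 1)) with hμdef
  have hLμ : L.map Complex.ofReal *ᵥ p = μ • p := by
    rw [hμdef, div_eq_inv_mul, mul_smul, ← hLp, smul_smul, inv_mul_cancel₀ hc0, one_smul]
  have hherm : (L.map Complex.ofReal).IsHermitian :=
    (isHermitian_iff_isSymm.mpr hsym).map _ fun x => by simp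
  have hμre : (μ.re : ℂ) = μ :=
    Complex.ext rfl (by simpa using (hherm.im_eq_zero_of_mulVec_eq_smul hp0 hLμ).symm)
  obtain ⟨w, hw0, hLw, hPw⟩ := exists_real_common_eigenvector hp0 (hμre ▸ hLμ) hPp
  have hμ0 : μ.re ≠ 0 := fun h => hw0 <| eq_zero_of_mulVec_eq_zero_of_centering_mulVec hrow hker
    (by rw [hLw, h, zero_smul]) (by rw [hPw, one_smul])
  refine Complex.norm_lt_one_of_sq_add_mul_eq_zero hγ₁ hγ₁₂ hμ0
    (hμ _ (mem_spectrum_of_mulVec_eq_smul hw0 hLw) hμ0) ?_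
  rw [hμre, hμdef, mul_div_cancel₀ _ hc0]
  ring

theorem exists_norm_pow_blockCentering_mul_consensusMatrix_lt_one [Nonempty n]
    {L : Matrix n n ℝ} (hsym : L.IsSymm) (hrow : L *ᵥ (fun _ => 1) = 0)
    (hker : Module.finrank ℝ (LinearMap.ker (toLin' L)) = 1) {γ₁ γ₂ : ℝ} (hγ₁ : 0 < γ₁)
    (hγ₁₂ : γ₁ < γ₂) (hμ : ∀ μ ∈ spectrum ℝ L, μ ≠ 0 → γ₁ - 2 * γ₂ > -4 / μ) :
    ∃ t ≠ 0, ‖(blockCentering n * consensusMatrix γ₁ γ₂ L) ^ t‖ < 1 := by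
  obtain ⟨t, ht, ht0⟩ := ((spectrum.eventually_norm_pow_lt_one fun z hz =>
    norm_lt_one_of_mem_spectrum_blockCentering_mul_consensusMatrix hsym hrow hker hγ₁ hγ₁₂ hμ
      hz).and (eventually_ne_atTop 0)).exists
  exact ⟨t, ht0, by rwa [linfty_opNorm_map_ofReal_pow] at ht⟩

theorem norm_blockCentering_mul_consensusMatrix_sub_le (γ₁ γ₂ : ℝ) {L L' : Matrix n n ℝ}
    (hsym : L.IsSymm) (hsym' : L'.IsSymm) (hrow : L *ᵥ (fun _ => 1) = 0)
    (hrow' : L' *ᵥ (fun _ => 1) = 0) {δ : ℝ} (hδ : 0 ≤ δ)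
    (hoff : ∀ i j, i ≠ j → |L i j - L' i j| ≤ δ) :
    ‖blockCentering n * consensusMatrix γ₁ γ₂ L - blockCentering n * consensusMatrix γ₁ γ₂ L'‖ ≤
      (|γ₁| + |γ₂|) * (2 * Fintype.card n * δ) := by
  rw [blockCentering_mul_consensusMatrix_sub (centering_mul_of_isSymm hsym hrow)
    (centering_mul_of_isSymm hsym' hrow')]
  exact norm_consensusMatrix_sub_le γ₁ γ₂ (by positivity)
    (sum_abs_le_of_mulVec_one_eq_zero (by rw [sub_mulVec, hrow, hrow', sub_zero]) hδ hoff)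

theorem blockCentering_mulVec_eq_stateTransition_mulVec {γ₁ γ₂ : ℝ} {L : ℕ → Matrix n n ℝ}
    (hsym : ∀ k, (L k).IsSymm) (hrow : ∀ k, L k *ᵥ (fun _ => 1) = 0) {x : ℕ → n ⊕ n → ℝ}
    (hx : ∀ k, x (k + 1) = consensusMatrix γ₁ γ₂ (L k) *ᵥ x k) (t : ℕ) :
    blockCentering n *ᵥ x t =
      stateTransition (fun k => blockCentering n * consensusMatrix γ₁ γ₂ (L k)) t *ᵥ
        (blockCentering n *ᵥ x 0) := by
  refine eq_stateTransition_mulVec (y := fun t => blockCentering n *ᵥ x t) (fun k => ?_) t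
  rw [hx k, mulVec_mulVec, mulVec_mulVec, mul_assoc, ← blockCentering_mul_consensusMatrix
    (centering_mul_of_isSymm (hsym k) (hrow k)) (mul_centering (hrow k)), ← mul_assoc,
    blockCentering_mul_self]

theorem tendsto_sub_of_tendsto_blockCentering_mulVec {x : ℕ → n ⊕ n → ℝ}
    (h : Tendsto (fun t => blockCentering n *ᵥ x t) atTop (𝓝 0)) (i j : n) :
    Tendsto (fun t => x t (Sum.inl i) - x t (Sum.inl j)) atTop (𝓝 0) ∧
      Tendsto (fun t => x t (Sum.inr i) - x t (Sum.inr j)) atTop (𝓝 0) := by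
  have hcoord := tendsto_pi_nhds.mp h
  simp only [blockCentering_mulVec] at hcoord
  constructor
  · simpa [centering_mulVec_sub] using (hcoord (.inl i)).sub (hcoord (.inl j))
  · simpa [centering_mulVec_sub] using (hcoord (.inr i)).sub (hcoord (.inr j))

end Consensus

theorem stmt_5_general (N : ℕ) (hN : 1 ≤ N) (L0 : Matrix (Fin N) (Fin N) ℝ)
    (hsym0 : L0.IsSymm)
    (hrow0 : L0.mulVec (fun _ => (1 : ℝ)) = 0)
    (hsimple : Module.finrank ℝ (LinearMap.ker (Matrix.toLin' L0)) = 1)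
    (γ₁ γ₂ : ℝ) (hγ₁ : 0 < γ₁) (hγ₁₂ : γ₁ < γ₂)
    (hμ : ∀ μ : ℝ, μ ∈ spectrum ℝ L0 → μ ≠ 0 → γ₁ - 2 * γ₂ > -4 / μ) :
    ∃ δA > (0 : ℝ), ∀ L : ℕ → Matrix (Fin N) (Fin N) ℝ,
      L 0 = L0 →
      (∀ k, (L k).IsSymm) →
      (∀ k, ∀ i j : Fin N, i ≠ j → L k i j ≤ 0) →
      (∀ k, (L k).mulVec (fun _ => (1 : ℝ)) = 0) →
      -- same edge set as the nominal graph
      (∀ k, ∀ i j : Fin N, i ≠ j → (L k i j ≠ 0 ↔ L0 i j ≠ 0)) →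
      -- common orthonormal eigenbasis: all the Laplacians commute
      (∀ k l, L k * L l = L l * L k) →
      -- entrywise max-norm bound on the adjacency matrices
      (∀ k, ∀ i j : Fin N,
        |(if i = j then (0 : ℝ) else -(L k i j)) -
          (if i = j then (0 : ℝ) else -(L0 i j))| < δA) →
      ∀ x : ℕ → (Fin N ⊕ Fin N → ℝ),
        (∀ k, x (k + 1)
            = (Matrix.fromBlocks 1 1 (-(γ₁ • L k)) (1 - γ₂ • L k)).mulVec (x k)) →
        ∀ i j : Fin N,
          Tendsto (fun k => x k (Sum.inl i) - x k (Sum.inl j)) atTop (nhds 0)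
          ∧ Tendsto (fun k => x k (Sum.inr i) - x k (Sum.inr j)) atTop (nhds 0) := by
  have : Nonempty (Fin N) := ⟨⟨0, hN⟩⟩
  obtain ⟨t, ht0, ht⟩ := exists_norm_pow_blockCentering_mul_consensusMatrix_lt_one hsym0 hrow0
    hsimple hγ₁ hγ₁₂ hμ
  obtain ⟨η, hη, hrobust⟩ := exists_forall_tendsto_stateTransition_zero ht0 ht
  have hγ : 0 < |γ₁| + |γ₂| := by positivity
  refine ⟨η / ((|γ₁| + |γ₂|) * (2 * N)), by positivity, ?_⟩
  intro L _ hsym _ hrow _ _ hclose x hx i j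
  refine tendsto_sub_of_tendsto_blockCentering_mulVec ?_ i j
  have hG : ∀ k, ‖blockCentering (Fin N) * consensusMatrix γ₁ γ₂ (L k) -
      blockCentering (Fin N) * consensusMatrix γ₁ γ₂ L0‖ ≤ η := fun k => by
    refine (norm_blockCentering_mul_consensusMatrix_sub_le γ₁ γ₂ (hsym k) hsym0 (hrow k) hrow0
      (δ := η / ((|γ₁| + |γ₂|) * (2 * N))) (by positivity) fun a b hab => ?_).trans_eq ?_
    · have := (hclose k a b).le
      rwa [if_neg hab, if_neg hab, neg_sub_neg, abs_sub_comm] at this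
    · simp
      field_simp
  rw [funext (blockCentering_mulVec_eq_stateTransition_mulVec hsym hrow hx),
    ← zero_mulVec (blockCentering (Fin N) *ᵥ x 0)]
  exact ((continuous_id.matrix_mulVec continuous_const).tendsto 0).comp (hrobust _ hG)

/-- consensus of second-order agents under time-varying weights:
if the nominal Laplacian L⁽⁰⁾ is that of a connected undirected graph and the
gains satisfy the consensus conditions, there is an admissible variation range
δ_A > 0 such that every time-varying Laplacian sequence with the same edge set,
a common eigenbasis (pairwise commuting), and adjacency matrices within δ_A (in
the entrywise max norm) of the nominal one yields consensus. -/
theorem stmt_5 (N : ℕ) (hN : 1 ≤ N) (L0 : Matrix (Fin N) (Fin N) ℝ)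
    (hsym0 : L0.IsSymm)
    (hoff0 : ∀ i j : Fin N, i ≠ j → L0 i j ≤ 0)
    (hrow0 : L0.mulVec (fun _ => (1 : ℝ)) = 0)
    (hpsd0 : L0.PosSemidef)
    (hsimple : Module.finrank ℝ (LinearMap.ker (Matrix.toLin' L0)) = 1)
    (γ₁ γ₂ : ℝ) (hγ₁ : 0 < γ₁) (hγ₁₂ : γ₁ < γ₂)
    (hμ : ∀ μ : ℝ, μ ∈ spectrum ℝ L0 → μ ≠ 0 → γ₁ - 2 * γ₂ > -4 / μ) :
    ∃ δA > (0 : ℝ), ∀ L : ℕ → Matrix (Fin N) (Fin N) ℝ,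
      L 0 = L0 →
      (∀ k, (L k).IsSymm) →
      (∀ k, ∀ i j : Fin N, i ≠ j → L k i j ≤ 0) →
      (∀ k, (L k).mulVec (fun _ => (1 : ℝ)) = 0) →
      -- same edge set as the nominal graph
      (∀ k, ∀ i j : Fin N, i ≠ j → (L k i j ≠ 0 ↔ L0 i j ≠ 0)) →
      -- common orthonormal eigenbasis: all the Laplacians commute
      (∀ k l, L k * L l = L l * L k) →
      -- entrywise max-norm bound on the adjacency matrices
      (∀ k, ∀ i j : Fin N,
        |(if i = j then (0 : ℝ) else -(L k i j)) -
          (if i = j then (0 : ℝ) else -(L0 i j))| < δA) →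
      ∀ x : ℕ → (Fin N ⊕ Fin N → ℝ),
        (∀ k, x (k + 1)
            = (Matrix.fromBlocks 1 1 (-(γ₁ • L k)) (1 - γ₂ • L k)).mulVec (x k)) →
        ∀ i j : Fin N,
          Tendsto (fun k => x k (Sum.inl i) - x k (Sum.inl j)) atTop (nhds 0)
          ∧ Tendsto (fun k => x k (Sum.inr i) - x k (Sum.inr j)) atTop (nhds 0) :=
  stmt_5_general N hN L0 hsym0 hrow0 hsimple γ₁ γ₂ hγ₁ hγ₁₂ hμ
end

section
/- Let γ₁, γ₂, a₀, a₁ ∈ ℝ with γ₁ ≠ 0, a₀ ≠ 0 and a₁ ≠ 0, and let p_A⁽⁰⁾, v_A⁽⁰⁾, p_A⁽¹⁾, v_A⁽¹⁾, u⁽⁰⁾, u⁽¹⁾ ∈ ℝ be given. Then there exists exactly one quadruple (p_B⁽⁰⁾, v_B⁽⁰⁾, p_B⁽¹⁾, v_B⁽¹⁾) ∈ ℝ⁴ satisfying the four equations: u⁽⁰⁾ = γ₁a₀(p_B⁽⁰⁾ − p_A⁽⁰⁾) + γ₂a₀(v_B⁽⁰⁾ − v_A⁽⁰⁾); u⁽¹⁾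 = γ₁a₁(p_B⁽¹⁾ − p_A⁽¹⁾) + γ₂a₁(v_B⁽¹⁾ − v_A⁽¹⁾); p_B⁽¹⁾ = p_B⁽⁰⁾ + v_B⁽⁰⁾; v_B⁽¹⁾ = v_B⁽⁰⁾ − u⁽⁰⁾. In particular, if agent Bob has Alice as its sole neighbor in an undirected network, Alice can compute Bob's initial position and velocity from two steps of received messages. -/
/-- when Bob has Alice as sole neighbor, the four equations from
two communication steps determine Bob's states uniquely: there is exactly one
quadruple (p_B⁽⁰⁾, v_B⁽⁰⁾, p_B⁽¹⁾, v_B⁽¹⁾) satisfying them. -/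
theorem stmt_7 (γ₁ γ₂ a₀ a₁ : ℝ) (hγ₁ : γ₁ ≠ 0) (ha₀ : a₀ ≠ 0) (ha₁ : a₁ ≠ 0)
    (pA0 vA0 pA1 vA1 u0 u1 : ℝ) :
    ∃! x : ℝ × ℝ × ℝ × ℝ,
      u0 = γ₁ * a₀ * (x.1 - pA0) + γ₂ * a₀ * (x.2.1 - vA0) ∧
      u1 = γ₁ * a₁ * (x.2.2.1 - pA1) + γ₂ * a₁ * (x.2.2.2 - vA1) ∧
      x.2.2.1 = x.1 + x.2.1 ∧
      x.2.2.2 = x.2.1 - u0 := by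
  set P : ℝ := u0 / a₀ + γ₁ * pA0 + γ₂ * vA0 with hP
  set Q : ℝ := u1 / a₁ + γ₁ * pA1 + γ₂ * (u0 + vA1) with hQ
  set v0 : ℝ := (Q - P) / γ₁ with hv0
  set p0 : ℝ := ((γ₁ + γ₂) * P - γ₂ * Q) / γ₁ ^ 2 with hp0
  refine ⟨(p0, v0, p0 + v0, v0 - u0), ⟨?_, ?_, rfl, rfl⟩, ?_⟩
  · simp only [hp0, hv0, hP, hQ]
    field_simp
    ring
  · simp only [hp0, hv0, hP, hQ]
    field_simp
    ring
  · rintro ⟨q0, w0, q1, w1⟩ ⟨h1, h2, h3, h4⟩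
    simp only at h1 h2 h3 h4
    subst h3 h4
    have eP : P = γ₁ * q0 + γ₂ * w0 := by
      rw [hP]; field_simp; linear_combination h1
    have eQ : Q = γ₁ * (q0 + w0) + γ₂ * w0 := by
      rw [hQ]; field_simp; linear_combination h2
    have hw : w0 = v0 := by
      rw [hv0, eP, eQ]; field_simp; ring
    have hq : q0 = p0 := by
      rw [hp0, eP, eQ]; field_simp; ring
    simp [hw, hq]
end

section
/- Let γ₁, γ₂ ∈ ℝ with γ₂ > γ₁ > 0 and set r = γ₂/(γ₂ − γ₁). Let k_a ≥ 1 and let real sequences p_A^{(k)}, v_A^{(k)}, p_B^{(k)}, v_B^{(k)}, u^{(k)}, a^{(k)} (with a^{(k)} ≠ 0) satisfy, for k = 0, …, k_a − 1: u^{(k)} = γ₁a^{(k)}(p_B^{(k)} − p_A^{(k)}) + γ₂a^{(k)}(v_B^{(k)} − v_A^{(k)}) and p_B^{(k+1)} = p_B^{(k)} + v_B^{(k)}. Define φ_k = (γ₁p_A^{(k)} + γ₂v_A^{(k)} + u^{(k)}/a^{(k)})/(γ₁ − γ₂). Then p_B^{(0)} = r^{k_a}·p_B^{(k_a)} + ∑_{k=0}^{k_a−1}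 r^k·φ_k and v_B^{(0)} = −(γ₁/γ₂)·r^{k_a}·p_B^{(k_a)} − ((γ₂ − γ₁)/γ₂)·φ_0 − (γ₁/γ₂)·∑_{k=0}^{k_a−1} r^k·φ_k. -/
/-!
Decoding Alice's message gives `γ₁ p_B^{(k)} + γ₂ v_B^{(k)} = (γ₁ - γ₂) φ_k`; combined with
`p_B^{(k+1)} = p_B^{(k)} + v_B^{(k)}` this is the backward recurrence
`p_B^{(k)} = r p_B^{(k+1)} + φ_k`, which unrolls to the formula for `p_B^{(0)}`.
The formula for `v_B^{(0)}` is then the step `k = 0` of the decoded combination.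
-/

open Finset

theorem eq_pow_mul_add_sum_of_backward_recurrence {R : Type*} [CommSemiring R]
    {x c : ℕ → R} {r : R} {n : ℕ} (h : ∀ k < n, x k = r * x (k + 1) + c k) :
    x 0 = r ^ n * x n + ∑ k ∈ range n, r ^ k * c k := by
  induction n with
  | zero => simp
  | succ m ih =>
    rw [ih fun k hk => h k (Nat.lt_succ_of_lt hk), h m (Nat.lt_succ_self m), sum_range_succ]
    ring

theorem combination_eq_of_message {γ₁ γ₂ pA vA pB vB a u φ : ℝ} (hγ : γ₁ ≠ γ₂) (ha : a ≠ 0)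
    (hu : u = γ₁ * a * (pB - pA) + γ₂ * a * (vB - vA))
    (hφ : φ = (γ₁ * pA + γ₂ * vA + u / a) / (γ₁ - γ₂)) :
    γ₁ * pB + γ₂ * vB = (γ₁ - γ₂) * φ := by
  have hdiv : u / a = γ₁ * (pB - pA) + γ₂ * (vB - vA) := by
    rw [hu]
    field_simp
  rw [hφ, hdiv, mul_div_cancel₀ _ (sub_ne_zero.2 hγ)]
  ring

theorem eq_mul_add_of_combination {γ₁ γ₂ p p' v φ : ℝ} (hγ : γ₂ - γ₁ ≠ 0) (hp : p' = p + v)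
    (hc : γ₁ * p + γ₂ * v = (γ₁ - γ₂) * φ) :
    p = γ₂ / (γ₂ - γ₁) * p' + φ := by
  rw [div_mul_eq_mul_div, eq_comm, div_add' _ _ _ hγ, div_eq_iff hγ, hp]
  linear_combination hc

/-- closed-form expression of Bob's initial position and velocity
in terms of Alice's data and Bob's position at time k_a. -/
theorem stmt_9 (γ₁ γ₂ : ℝ) (h1 : 0 < γ₁) (h2 : γ₁ < γ₂)
    (r : ℝ) (hr : r = γ₂ / (γ₂ - γ₁))
    (ka : ℕ) (hka : 1 ≤ ka)
    (pA vA pB vB u a : ℕ → ℝ) (ha : ∀ k, a k ≠ 0)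
    (hu : ∀ k < ka, u k = γ₁ * a k * (pB k - pA k) + γ₂ * a k * (vB k - vA k))
    (hp : ∀ k < ka, pB (k + 1) = pB k + vB k)
    (φ : ℕ → ℝ)
    (hφ : ∀ k, φ k = (γ₁ * pA k + γ₂ * vA k + u k / a k) / (γ₁ - γ₂)) :
    pB 0 = r ^ ka * pB ka + ∑ k ∈ Finset.range ka, r ^ k * φ k
    ∧ vB 0 = -(γ₁ / γ₂) * r ^ ka * pB ka - ((γ₂ - γ₁) / γ₂) * φ 0
        - (γ₁ / γ₂) * ∑ k ∈ Finset.range ka, r ^ k * φ k := by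
  have hγ₂ : γ₂ ≠ 0 := (h1.trans h2).ne'
  have hcomb : ∀ k < ka, γ₁ * pB k + γ₂ * vB k = (γ₁ - γ₂) * φ k := fun k hk =>
    combination_eq_of_message h2.ne (ha k) (hu k hk) (hφ k)
  have hpos : pB 0 = r ^ ka * pB ka + ∑ k ∈ range ka, r ^ k * φ k :=
    eq_pow_mul_add_sum_of_backward_recurrence fun k hk =>
      hr ▸ eq_mul_add_of_combination (sub_pos.2 h2).ne' (hp k hk) (hcomb k hk)
  refine ⟨hpos, ?_⟩
  field_simp
  linear_combination hcomb 0 hka - γ₁ * hpos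
end

section
/- Let γ₁, γ₂ ∈ ℝ with γ₂ > γ₁ > 0, set r = γ₂/(γ₂ − γ₁), let k_a ≥ 1 and δ ≥ 0. Suppose real sequences p_A^{(k)}, v_A^{(k)}, p_B^{(k)}, v_B^{(k)}, u^{(k)}, a^{(k)} (with a^{(k)} ≠ 0) satisfy, for k = 0, …, k_a − 1: u^{(k)} = γ₁a^{(k)}(p_B^{(k)} − p_A^{(k)}) + γ₂a^{(k)}(v_B^{(k)} − v_A^{(k)}) and p_B^{(k+1)} = p_B^{(k)} + v_B^{(k)}, and suppose local δ-agreement holds at time k_a: |p_B^{(k_a)} − p_A^{(k_a)}| ≤ δ. Define φ_k = (γ₁p_A^{(k)} + γ₂v_A^{(k)} + u^{(k)}/a^{(k)})/(γ₁ − γ₂) and the estimates p̂_B^{(0)} = r^{k_a}·p_A^{(k_a)} + ∑_{k=0}^{k_a−1} r^k·φ_k and v̂_B^{(0)} = −(γ₁/γ₂)·r^{k_a}·p_A^{(k_a)} − ((γ₂ − γ₁)/γ₂)·φ_0 − (γ₁/γ₂)·∑_{k=0}^{k_a−1} r^k·φ_k. Then the estimation errors ε_p = p̂_B^{(0)} −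 p_B^{(0)} and ε_v = v̂_B^{(0)} − v_B^{(0)} satisfy |ε_p| ≤ (γ₂/(γ₂ − γ₁))^{k_a}·δ and |ε_v| ≤ (γ₁·γ₂^{k_a−1}/(γ₂ − γ₁)^{k_a})·δ. -/
/-- Theorem 2 of the paper: under local δ-agreement at time k_a,
Alice's estimates of Bob's initial states have errors bounded by
(γ₂/(γ₂-γ₁))^{k_a}·δ and γ₁γ₂^{k_a-1}/(γ₂-γ₁)^{k_a}·δ respectively. -/
theorem stmt_10 (γ₁ γ₂ : ℝ) (h1 : 0 < γ₁) (h2 : γ₁ < γ₂)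
    (r : ℝ) (hr : r = γ₂ / (γ₂ - γ₁))
    (ka : ℕ) (hka : 1 ≤ ka) (δ : ℝ) (hδ : 0 ≤ δ)
    (pA vA pB vB u a : ℕ → ℝ) (ha : ∀ k, a k ≠ 0)
    (hu : ∀ k < ka, u k = γ₁ * a k * (pB k - pA k) + γ₂ * a k * (vB k - vA k))
    (hp : ∀ k < ka, pB (k + 1) = pB k + vB k)
    (hagree : |pB ka - pA ka| ≤ δ)
    (φ : ℕ → ℝ)
    (hφ : ∀ k, φ k = (γ₁ * pA k + γ₂ * vA k + u k / a k) / (γ₁ - γ₂))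
    (phat vhat : ℝ)
    (hphat : phat = r ^ ka * pA ka + ∑ k ∈ Finset.range ka, r ^ k * φ k)
    (hvhat : vhat = -(γ₁ / γ₂) * r ^ ka * pA ka - ((γ₂ - γ₁) / γ₂) * φ 0
        - (γ₁ / γ₂) * ∑ k ∈ Finset.range ka, r ^ k * φ k) :
    |phat - pB 0| ≤ (γ₂ / (γ₂ - γ₁)) ^ ka * δ
    ∧ |vhat - vB 0| ≤ γ₁ * γ₂ ^ (ka - 1) / (γ₂ - γ₁) ^ ka * δ := by
  have hsub : (0:ℝ) < γ₂ - γ₁ := by linarith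
  have hne : γ₁ - γ₂ ≠ 0 := by linarith
  have hne' : γ₂ - γ₁ ≠ 0 := ne_of_gt hsub
  have hγ₂ : (0:ℝ) < γ₂ := lt_trans h1 h2
  have hrpos : 0 < r := by rw [hr]; positivity
  -- φ k in terms of Bob's states
  have hφB : ∀ k < ka, φ k = (γ₁ * pB k + γ₂ * vB k) / (γ₁ - γ₂) := by
    intro k hk
    rw [hφ k, hu k hk]
    have : (γ₁ * a k * (pB k - pA k) + γ₂ * a k * (vB k - vA k)) / a k
        = γ₁ * (pB k - pA k) + γ₂ * (vB k - vA k) := by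
      field_simp [ha k]
    rw [this]; ring_nf
  -- telescoping terms
  have hterm : ∀ k < ka, r ^ k * φ k = r ^ k * pB k - r ^ (k+1) * pB (k+1) := by
    intro k hk
    rw [hφB k hk, hp k hk, hr, pow_succ]
    field_simp
    ring
  have hsum : ∑ k ∈ Finset.range ka, r ^ k * φ k = pB 0 - r ^ ka * pB ka := by
    rw [Finset.sum_congr rfl (fun k hk => hterm k (Finset.mem_range.mp hk))]
    have := Finset.sum_range_sub' (fun k => r ^ k * pB k) ka
    simpa using this
  have hepsp : phat - pB 0 = r ^ ka * (pA ka - pB ka) := by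
    rw [hphat, hsum]; ring
  have habs : |pA ka - pB ka| ≤ δ := by
    rwa [abs_sub_comm] at hagree
  have hb1 : |phat - pB 0| ≤ (γ₂ / (γ₂ - γ₁)) ^ ka * δ := by
    rw [hepsp, abs_mul, abs_pow, abs_of_pos hrpos, ← hr]
    exact mul_le_mul_of_nonneg_left habs (by positivity)
  refine ⟨hb1, ?_⟩
  have hφ0 : φ 0 = (γ₁ * pB 0 + γ₂ * vB 0) / (γ₁ - γ₂) := hφB 0 hka
  have hepsv : vhat - vB 0 = -(γ₁ / γ₂) * (r ^ ka * (pA ka - pB ka)) := by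
    rw [hvhat, hsum, hφ0]
    field_simp
    ring
  have hkasub : γ₂ ^ (ka - 1) * γ₂ = γ₂ ^ ka := by
    rw [← pow_succ, Nat.sub_add_cancel hka]
  have : |vhat - vB 0| = γ₁ / γ₂ * (r ^ ka * |pA ka - pB ka|) := by
    rw [hepsv, abs_mul, abs_mul, abs_pow, abs_of_pos hrpos, abs_neg,
      abs_of_pos (by positivity : (0:ℝ) < γ₁ / γ₂)]
  rw [this]
  have : γ₁ / γ₂ * (r ^ ka * δ) = γ₁ * γ₂ ^ (ka - 1) / (γ₂ - γ₁) ^ ka * δ := by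
    rw [hr, div_pow]
    field_simp
    rw [← hkasub]
    ring
  rw [← this]
  have h2' : 0 ≤ γ₁ / γ₂ := by positivity
  have h3 : 0 ≤ r ^ ka := by positivity
  exact mul_le_mul_of_nonneg_left (mul_le_mul_of_nonneg_left habs h3) h2'
end

section
/- In the setting of the estimation theorem (same hypotheses and definitions of φ_k, p̂_B^{(0)}, v̂_B^{(0)}, with γ₂ > γ₁ > 0 and r = γ₂/(γ₂ − γ₁)), define δ_p = p_B^{(k_a)} − p_A^{(k_a)}. Then the estimation errors satisfy exactly |p̂_B^{(0)} − p_B^{(0)}| = r^{k_a}·|δ_p| and |v̂_B^{(0)} − v_B^{(0)}| = (γ₁/γ₂)·r^{k_a}·|δ_p|. -/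
/-- the estimation errors are exactly r^{k_a}|δ_p| and
(γ₁/γ₂)r^{k_a}|δ_p| where δ_p = p_B^{(k_a)} - p_A^{(k_a)}. -/
theorem stmt_11 (γ₁ γ₂ : ℝ) (h1 : 0 < γ₁) (h2 : γ₁ < γ₂)
    (r : ℝ) (hr : r = γ₂ / (γ₂ - γ₁))
    (ka : ℕ) (hka : 1 ≤ ka)
    (pA vA pB vB u a : ℕ → ℝ) (ha : ∀ k, a k ≠ 0)
    (hu : ∀ k < ka, u k = γ₁ * a k * (pB k - pA k) + γ₂ * a k * (vB k - vA k))
    (hp : ∀ k < ka, pB (k + 1) = pB k + vB k)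
    (φ : ℕ → ℝ)
    (hφ : ∀ k, φ k = (γ₁ * pA k + γ₂ * vA k + u k / a k) / (γ₁ - γ₂))
    (phat vhat δp : ℝ)
    (hδp : δp = pB ka - pA ka)
    (hphat : phat = r ^ ka * pA ka + ∑ k ∈ Finset.range ka, r ^ k * φ k)
    (hvhat : vhat = -(γ₁ / γ₂) * r ^ ka * pA ka - ((γ₂ - γ₁) / γ₂) * φ 0
        - (γ₁ / γ₂) * ∑ k ∈ Finset.range ka, r ^ k * φ k) :
    |phat - pB 0| = r ^ ka * |δp|
    ∧ |vhat - vB 0| = (γ₁ / γ₂) * r ^ ka * |δp| := by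
  have hγ2 : (0:ℝ) < γ₂ := lt_trans h1 h2
  have hd : (0:ℝ) < γ₂ - γ₁ := by linarith
  have hd' : γ₂ - γ₁ ≠ 0 := ne_of_gt hd
  have hd'' : γ₁ - γ₂ ≠ 0 := by intro h; apply hd'; linarith
  have hrpos : 0 < r := by rw [hr]; positivity
  -- φ k in terms of pB, vB for k < ka
  have hφ' : ∀ k < ka, φ k = (γ₁ * pB k + γ₂ * vB k) / (γ₁ - γ₂) := by
    intro k hk
    rw [hφ k, hu k hk]
    have : (γ₁ * a k * (pB k - pA k) + γ₂ * a k * (vB k - vA k)) / a k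
        = γ₁ * (pB k - pA k) + γ₂ * (vB k - vA k) := by
      field_simp [ha k]
    rw [this]; ring_nf
  -- key recursion
  have hrec : ∀ k < ka, pB k = r * pB (k + 1) + φ k := by
    intro k hk
    rw [hφ' k hk, hp k hk, hr]
    field_simp
    ring
  -- induction: pB 0 = r^n pB n + ∑_{k<n} r^k φ k, for n ≤ ka
  have key : ∀ n ≤ ka, pB 0 = r ^ n * pB n + ∑ k ∈ Finset.range n, r ^ k * φ k := by
    intro n hn
    induction n with
    | zero => simp
    | succ m ih =>
        have hm : m < ka := lt_of_lt_of_le (Nat.lt_succ_self m) hn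
        have := ih (le_of_lt hm)
        rw [this, Finset.sum_range_succ, hrec m hm]
        ring
  have hkey := key ka le_rfl
  set S := ∑ k ∈ Finset.range ka, r ^ k * φ k with hS
  -- position error
  have hperr : phat - pB 0 = -(r ^ ka * δp) := by
    rw [hphat, hkey, hδp]; ring
  have h1' : |phat - pB 0| = r ^ ka * |δp| := by
    rw [hperr, abs_neg, abs_mul, abs_of_pos (pow_pos hrpos ka)]
  refine ⟨h1', ?_⟩
  -- velocity: from φ 0 recover vB 0
  have hφ0 : φ 0 = (γ₁ * pB 0 + γ₂ * vB 0) / (γ₁ - γ₂) :=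
    hφ' 0 (lt_of_lt_of_le Nat.zero_lt_one hka)
  have hvB0 : vB 0 = -((γ₂ - γ₁) / γ₂) * φ 0 - (γ₁ / γ₂) * pB 0 := by
    rw [hφ0]; field_simp; ring
  have hverr : vhat - vB 0 = (γ₁ / γ₂) * (r ^ ka * δp) := by
    rw [hvhat, hvB0, hkey, hδp]; ring
  rw [hverr, abs_mul, abs_mul, abs_of_pos (by positivity : (0:ℝ) < γ₁ / γ₂),
    abs_of_pos (pow_pos hrpos ka), mul_assoc]
end

section
/- Let p and q be distinct primes with gcd(pq, (p−1)(q−1)) = 1, let n = pq and λ = lcm(p−1, q−1). Let g be an integer coprime to n² such that g^λ ≡ 1 (mod n) and the integer L(g^λ mod n²) = ((g^λ mod n²) − 1)/n is coprime to n. Then for every integer m with 0 ≤ m < n and every integer r coprime to n, the ciphertext c = g^m·r^n mod n² satisfies: c^λ ≡ 1 (mod n), the integer L(c^λ mod n²) = ((c^λ mod n²) − 1)/n is well defined, and L(c^λ mod n²) ≡ m · L(g^λ mod n²) (mod n); consequently m ≡ L(c^λ mod n²) · (L(g^λ mod n²))^{−1} (mod n), i.e. Paillier decryption recovers the plaintext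 m. -/
-- Carmichael-type fact: w coprime to n = pq squarefree satisfies w^(n*lam) ≡ 1 mod n².
lemma paillier_aux_pow (p q : ℕ) (hp : p.Prime) (hq : q.Prime) (hpq : p ≠ q)
    (n lam : ℕ) (hn : n = p * q) (hlam : lam = Nat.lcm (p - 1) (q - 1))
    (w : ℕ) (hw : Nat.Coprime w n) : w ^ (n * lam) ≡ 1 [MOD n ^ 2] := by
  have hn2 : n ^ 2 = p ^ 2 * q ^ 2 := by rw [hn]; ring
  have hcop : Nat.Coprime (p ^ 2) (q ^ 2) :=
    ((Nat.coprime_primes hp hq).2 hpq).pow 2 2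
  have key : ∀ s : ℕ, s.Prime → s ∣ n → (s - 1) ∣ lam →
      w ^ (n * lam) ≡ 1 [MOD s ^ 2] := by
    intro s hs hsn hsl
    have hws : Nat.Coprime w (s ^ 2) := ((Nat.Coprime.coprime_dvd_right hsn hw)).pow_right 2
    have htot : Nat.totient (s ^ 2) = s * (s - 1) := by
      rw [Nat.totient_prime_pow hs (by norm_num)]; ring_nf
    have hdvd : Nat.totient (s ^ 2) ∣ n * lam := by
      rw [htot]; exact mul_dvd_mul hsn hsl
    obtain ⟨k, hk⟩ := hdvd
    calc w ^ (n * lam) = (w ^ Nat.totient (s ^ 2)) ^ k := by rw [← pow_mul, hk]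
      _ ≡ 1 ^ k [MOD s ^ 2] := (Nat.ModEq.pow_totient hws).pow k
      _ = 1 := one_pow k
  rw [hn2]
  refine (Nat.modEq_and_modEq_iff_modEq_mul hcop).1 ⟨?_, ?_⟩
  · exact key p hp (hn ▸ Dvd.intro q rfl) (hlam ▸ Nat.dvd_lcm_left _ _)
  · exact key q hq (hn ▸ Dvd.intro_left p rfl) (hlam ▸ Nat.dvd_lcm_right _ _)

lemma paillier_aux_binom (N L : ℤ) (m : ℕ) :
    (1 + N * L) ^ m ≡ 1 + (m : ℤ) * (N * L) [ZMOD N ^ 2] := by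
  induction m with
  | zero => simp
  | succ k ih =>
    have h1 : (1 + N * L) ^ (k + 1) = (1 + N * L) ^ k * (1 + N * L) := pow_succ _ _
    have h2 : (1 + N * L) ^ k * (1 + N * L) ≡ (1 + (k : ℤ) * (N * L)) * (1 + N * L)
        [ZMOD N ^ 2] := ih.mul_right _
    have h3 : (1 + (k : ℤ) * (N * L)) * (1 + N * L) ≡ 1 + ((k : ℤ) + 1) * (N * L)
        [ZMOD N ^ 2] := by
      exact Int.modEq_iff_dvd.2 ⟨-((k : ℤ) * L ^ 2), by ring⟩
    calc (1 + N * L) ^ (k + 1) = (1 + N * L) ^ k * (1 + N * L) := h1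
      _ ≡ 1 + ((k : ℤ) + 1) * (N * L) [ZMOD N ^ 2] := h2.trans h3
      _ = 1 + ((k + 1 : ℕ) : ℤ) * (N * L) := by push_cast; ring

/-- correctness of Paillier decryption. With n = pq,
λ = lcm(p-1, q-1), g coprime to n² with g^λ ≡ 1 (mod n) and
L(g^λ mod n²) coprime to n, the ciphertext c = g^m·r^n mod n² satisfies
c^λ ≡ 1 (mod n), L(c^λ mod n²) is well defined, and
L(c^λ mod n²) ≡ m·L(g^λ mod n²) (mod n); hence decryption recovers m. -/
theorem stmt_13 (p q : ℕ) (hp : p.Prime) (hq : q.Prime) (hpq : p ≠ q)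
    (hgcd : Nat.gcd (p * q) ((p - 1) * (q - 1)) = 1)
    (n lam : ℕ) (hn : n = p * q) (hlam : lam = Nat.lcm (p - 1) (q - 1))
    (g : ℕ) (hg : Nat.Coprime g (n ^ 2))
    (hg1 : g ^ lam ≡ 1 [MOD n])
    (hgL : Nat.Coprime ((g ^ lam % n ^ 2 - 1) / n) n)
    (m : ℕ) (hm : m < n) (r : ℕ) (hr : Nat.Coprime r n)
    (c : ℕ) (hc : c = (g ^ m * r ^ n) % n ^ 2) :
    c ^ lam ≡ 1 [MOD n]
    ∧ n ∣ (c ^ lam % n ^ 2 - 1)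
    ∧ (c ^ lam % n ^ 2 - 1) / n ≡ m * ((g ^ lam % n ^ 2 - 1) / n) [MOD n]
    ∧ ∀ t : ℕ, ((g ^ lam % n ^ 2 - 1) / n) * t ≡ 1 [MOD n] →
        m ≡ ((c ^ lam % n ^ 2 - 1) / n) * t [MOD n] := by
  have hn1 : 1 < n := by
    rw [hn]
    nlinarith [hp.two_le, hq.two_le]
  have hdn : n ∣ n ^ 2 := dvd_pow_self n (by norm_num)
  -- G := g^lam % n², its properties
  set G := g ^ lam % n ^ 2 with hG
  have hGmod : G ≡ 1 [MOD n] :=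
    ((Nat.mod_modEq (g ^ lam) (n ^ 2)).of_dvd hdn).trans hg1
  have hG1 : 1 ≤ G := by
    by_contra hcon
    have h0 : G = 0 := Nat.lt_one_iff.1 (not_le.1 hcon)
    rw [h0] at hGmod
    have := Nat.le_of_dvd one_pos (Nat.modEq_zero_iff_dvd.1 hGmod.symm)
    omega
  have hGdvd : n ∣ G - 1 := (Nat.modEq_iff_dvd' hG1).1 hGmod.symm
  set Lg := (G - 1) / n with hLg
  have hGeq : G = 1 + n * Lg := by
    have h2 : n * Lg = G - 1 := Nat.mul_div_cancel' hGdvd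
    rw [h2]; omega
  -- total congruence mod n²
  have hcop_r : Nat.Coprime r (n ^ 2) := hr.pow_right 2
  have hrpow : r ^ (n * lam) ≡ 1 [MOD n ^ 2] :=
    paillier_aux_pow p q hp hq hpq n lam hn hlam r hr
  have hclam : c ^ lam ≡ 1 + m * n * Lg [MOD n ^ 2] := by
    have h1 : c ^ lam ≡ (g ^ m * r ^ n) ^ lam [MOD n ^ 2] := by
      rw [hc]; exact (Nat.mod_modEq _ _).pow lam
    have h2 : (g ^ m * r ^ n) ^ lam = (g ^ lam) ^ m * r ^ (n * lam) := by
      rw [mul_pow, ← pow_mul, ← pow_mul, mul_comm m lam, pow_mul]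
    have h3 : (g ^ lam) ^ m * r ^ (n * lam) ≡ G ^ m * 1 [MOD n ^ 2] :=
      Nat.ModEq.mul ((Nat.mod_modEq _ _).symm.pow m) hrpow
    have h4 : G ^ m ≡ 1 + m * n * Lg [MOD n ^ 2] := by
      have := paillier_aux_binom (n : ℤ) (Lg : ℤ) m
      have hcast : ((G : ℤ)) ^ m ≡ 1 + (m : ℤ) * ((n : ℤ) * Lg) [ZMOD (n:ℤ) ^ 2] := by
        rw [hGeq]; push_cast; exact this
      have : (n ^ 2 : ℤ) ∣ (1 + (m : ℤ) * ((n : ℤ) * Lg)) - (G : ℤ) ^ m :=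
        Int.ModEq.dvd hcast
      refine (Nat.modEq_iff_dvd).2 ?_
      push_cast
      convert this using 1
      ring
    calc c ^ lam ≡ (g ^ m * r ^ n) ^ lam [MOD n ^ 2] := h1
      _ = (g ^ lam) ^ m * r ^ (n * lam) := h2
      _ ≡ G ^ m * 1 [MOD n ^ 2] := h3
      _ = G ^ m := mul_one _
      _ ≡ 1 + m * n * Lg [MOD n ^ 2] := h4
  -- C := c^lam % n²
  set C := c ^ lam % n ^ 2 with hC
  have hCn2 : C ≡ 1 + m * n * Lg [MOD n ^ 2] := (Nat.mod_modEq _ _).trans hclam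
  have hCmod : C ≡ 1 [MOD n] := by
    have h := hCn2.of_dvd hdn
    have hx : n ∣ m * n * Lg := ⟨m * Lg, by ring⟩
    have : (1 + m * n * Lg : ℕ) ≡ 1 [MOD n] :=
      ((Nat.modEq_iff_dvd' (Nat.le_add_right 1 _)).2 (by simpa using hx)).symm
    exact h.trans this
  have first : c ^ lam ≡ 1 [MOD n] := ((Nat.mod_modEq (c ^ lam) (n ^ 2)).of_dvd hdn).symm.trans hCmod
  have hC1 : 1 ≤ C := by
    by_contra hcon
    have h0 : C = 0 := Nat.lt_one_iff.1 (not_le.1 hcon)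
    rw [h0] at hCmod
    have := Nat.le_of_dvd one_pos (Nat.modEq_zero_iff_dvd.1 hCmod.symm)
    omega
  have hCdvd : n ∣ C - 1 := (Nat.modEq_iff_dvd' hC1).1 hCmod.symm
  set Lc := (C - 1) / n with hLc
  have hCeq : C = 1 + n * Lc := by
    have h2 : n * Lc = C - 1 := Nat.mul_div_cancel' hCdvd
    rw [h2]; omega
  have third : Lc ≡ m * Lg [MOD n] := by
    have hdvd2 : ((n : ℤ)) ^ 2 ∣ (1 + (m : ℤ) * n * Lg) - (C : ℤ) := by
      have h := (Nat.modEq_iff_dvd).1 hCn2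
      push_cast at h
      convert h using 2 <;> push_cast <;> ring
    have hkey : (n : ℤ) ∣ (m : ℤ) * Lg - Lc := by
      have hCZ : (C : ℤ) = 1 + n * Lc := by rw [hCeq]; push_cast; ring
      have : ((n : ℤ)) ^ 2 ∣ (n : ℤ) * ((m : ℤ) * Lg - Lc) := by
        have h := hdvd2
        rw [hCZ] at h
        convert h using 1
        ring
      have hn0 : (n : ℤ) ≠ 0 := by positivity
      rw [pow_two] at this
      exact (mul_dvd_mul_iff_left hn0).1 this
    refine (Nat.modEq_iff_dvd).2 ?_
    push_cast
    exact hkey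
  refine ⟨first, hCdvd, third, ?_⟩
  intro t ht
  calc (m : ℕ) = m * 1 := (mul_one m).symm
    _ ≡ m * (Lg * t) [MOD n] := ht.symm.mul_left m
    _ = (m * Lg) * t := by ring
    _ ≡ Lc * t [MOD n] := third.symm.mul_right t
end

section
/- Let γ₁, γ₂ ∈ ℝ with γ₂ > 0 and γ₁ ≥ 0, let K ≥ 0, and let p_A^{(k)}, v_A^{(k)} (0 ≤ k ≤ K) and u^{(k)} (0 ≤ k ≤ K) be the data observed by Alice, with u^{(k)} ≠ 0 for all k. Then for every candidate initial state (p̃_B⁽⁰⁾, ṽ_B⁽⁰⁾) ∈ ℝ² such that the quantity γ₁(p̃_B⁽⁰⁾ − p_A^{(0)}) + γ₂(ṽ_B⁽⁰⁾ − v_A^{(0)}) is nonzero and has the same sign as u^{(0)}, there exist a sequence of inputs w^{(k)} ∈ ℝ, a trajectory defined by p̃_B^{(k+1)} = p̃_B^{(k)} + ṽ_B^{(k)}, ṽ_B^{(k+1)} = ṽ_B^{(k)} + w^{(k)}, and positive weights ã^{(k)} > 0 (0 ≤ k ≤ K) such that u^{(k)} = γ₁·ã^{(k)}(p̃_B^{(k)}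 − p_A^{(k)}) + γ₂·ã^{(k)}(ṽ_B^{(k)} − v_A^{(k)}) for all 0 ≤ k ≤ K. Hence the observed data are consistent with infinitely many distinct initial states of Bob, and Bob's initial states cannot be determined by Alice when the coupling weights are unknown and Bob has other (unobserved) neighbors. -/
/-!
Alice only sees the messages `u k = a k * r k`, where `r k = γ₁ (pB k - pA k) + γ₂ (vB k - vA k)`
is the residual of Bob's state and `a k > 0` is unknown, so a trajectory of Bob explains the data
exactly when `r k * u k > 0` for every `k ≤ K`, with `a k = u k / r k`. Since Bob's input is free,
from step `1` on his velocity can be chosen so that `r k = u k`; only the initial residual is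
constrained, and by the sign of `u 0` alone. The initial states meeting that sign condition form
an open half-plane, in particular an infinite set.
-/

noncomputable def feedbackTrajectory (f : ℕ → ℝ → ℝ) (p₀ v₀ : ℝ) : ℕ → ℝ × ℝ
  | 0 => (p₀, v₀)
  | k + 1 =>
    let s := feedbackTrajectory f p₀ v₀ k
    (s.1 + s.2, f (k + 1) (s.1 + s.2))

section

variable (f : ℕ → ℝ → ℝ) (p₀ v₀ : ℝ) (k : ℕ)

theorem feedbackTrajectory_succ_fst :
    (feedbackTrajectory f p₀ v₀ (k + 1)).1 =
      (feedbackTrajectory f p₀ v₀ k).1 + (feedbackTrajectory f p₀ v₀ k).2 :=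
  rfl

theorem feedbackTrajectory_succ_snd :
    (feedbackTrajectory f p₀ v₀ (k + 1)).2 = f (k + 1) (feedbackTrajectory f p₀ v₀ (k + 1)).1 :=
  rfl

end

section

variable (γ₁ γ₂ : ℝ) (K : ℕ) (pA vA u : ℕ → ℝ)

def IsConsistentInitialState (x : ℝ × ℝ) : Prop :=
  ∃ w pB vB a : ℕ → ℝ,
    pB 0 = x.1 ∧ vB 0 = x.2 ∧
    (∀ k, pB (k + 1) = pB k + vB k) ∧
    (∀ k, vB (k + 1) = vB k + w k) ∧
    (∀ k ≤ K, 0 < a k) ∧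
    (∀ k ≤ K, u k = γ₁ * a k * (pB k - pA k) + γ₂ * a k * (vB k - vA k))

variable {γ₁ γ₂ K pA vA u}

theorem isConsistentInitialState_of_residual_mul_pos {pB vB : ℕ → ℝ}
    (hpB : ∀ k, pB (k + 1) = pB k + vB k)
    (hres : ∀ k ≤ K, 0 < (γ₁ * (pB k - pA k) + γ₂ * (vB k - vA k)) * u k) :
    IsConsistentInitialState γ₁ γ₂ K pA vA u (pB 0, vB 0) := by
  set r : ℕ → ℝ := fun k => γ₁ * (pB k - pA k) + γ₂ * (vB k - vA k)
  refine ⟨fun k => vB (k + 1) - vB k, pB, vB, fun k => u k / r k, rfl, rfl, hpB,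
    fun k => by ring, fun k hk => ?_, fun k hk => ?_⟩
  · have h := hres k hk
    rw [mul_comm] at h
    exact div_pos_iff.mpr (mul_pos_iff.mp h)
  · have hr : r k ≠ 0 := left_ne_zero_of_mul (hres k hk).ne'
    calc u k = u k / r k * r k := (div_mul_cancel₀ _ hr).symm
      _ = _ := by ring

theorem isConsistentInitialState_of_mul_pos (hγ₂ : γ₂ ≠ 0) (hu : ∀ k ≤ K, u k ≠ 0) {x : ℝ × ℝ}
    (h0 : 0 < (γ₁ * (x.1 - pA 0) + γ₂ * (x.2 - vA 0)) * u 0) :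
    IsConsistentInitialState γ₁ γ₂ K pA vA u x := by
  let f (k : ℕ) (p : ℝ) : ℝ := vA k + (u k - γ₁ * (p - pA k)) / γ₂
  have hf (k : ℕ) (p : ℝ) : γ₁ * (p - pA k) + γ₂ * (f k p - vA k) = u k := by
    simp only [f]
    field_simp
    ring
  let s := feedbackTrajectory f x.1 x.2
  have hres_succ (k : ℕ) :
      γ₁ * ((s (k + 1)).1 - pA (k + 1)) + γ₂ * ((s (k + 1)).2 - vA (k + 1)) = u (k + 1) := by
    rw [feedbackTrajectory_succ_snd]
    exact hf _ _
  refine isConsistentInitialState_of_residual_mul_pos (pB := fun k => (s k).1)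
    (vB := fun k => (s k).2) (feedbackTrajectory_succ_fst _ _ _) fun k hk => ?_
  cases k with
  | zero => exact h0
  | succ k =>
    rw [hres_succ]
    exact mul_self_pos.mpr (hu _ hk)

theorem setOf_isConsistentInitialState_infinite (hγ₂ : 0 < γ₂) (hu : ∀ k ≤ K, u k ≠ 0) :
    {x | IsConsistentInitialState γ₁ γ₂ K pA vA u x}.Infinite := by
  have hu0 : u 0 ≠ 0 := hu 0 K.zero_le
  refine Set.infinite_of_injective_forall_mem
    (f := fun n : ℕ => (pA 0, vA 0 + (n + 1) * u 0)) (fun m n hmn => ?_) fun n => ?_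
  · have h := (Prod.mk.inj hmn).2
    exact_mod_cast add_right_cancel (mul_right_cancel₀ hu0 (add_left_cancel h))
  · apply isConsistentInitialState_of_mul_pos hγ₂.ne' hu
    have : (γ₁ * (pA 0 - pA 0) + γ₂ * (vA 0 + (n + 1) * u 0 - vA 0)) * u 0
        = γ₂ * (n + 1) * (u 0 * u 0) := by ring
    rw [this]
    exact mul_pos (mul_pos hγ₂ n.cast_add_one_pos) (mul_self_pos.mpr hu0)

end

theorem stmt_15_general (γ₁ γ₂ : ℝ) (hγ₂ : 0 < γ₂) (K : ℕ)
    (pA vA u : ℕ → ℝ) (hu : ∀ k ≤ K, u k ≠ 0) :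
    (∀ pB0 vB0 : ℝ,
      (γ₁ * (pB0 - pA 0) + γ₂ * (vB0 - vA 0)) * u 0 > 0 →
      ∃ w pB vB a : ℕ → ℝ,
        pB 0 = pB0 ∧ vB 0 = vB0 ∧
        (∀ k, pB (k + 1) = pB k + vB k) ∧
        (∀ k, vB (k + 1) = vB k + w k) ∧
        (∀ k ≤ K, 0 < a k) ∧
        (∀ k ≤ K, u k = γ₁ * a k * (pB k - pA k) + γ₂ * a k * (vB k - vA k)))
    ∧ Set.Infinite {x : ℝ × ℝ |
        ∃ w pB vB a : ℕ → ℝ,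
          pB 0 = x.1 ∧ vB 0 = x.2 ∧
          (∀ k, pB (k + 1) = pB k + vB k) ∧
          (∀ k, vB (k + 1) = vB k + w k) ∧
          (∀ k ≤ K, 0 < a k) ∧
          (∀ k ≤ K, u k = γ₁ * a k * (pB k - pA k) + γ₂ * a k * (vB k - vA k))} :=
  ⟨fun pB0 vB0 h0 =>
      isConsistentInitialState_of_mul_pos (x := (pB0, vB0)) hγ₂.ne' hu h0,
    setOf_isConsistentInitialState_infinite hγ₂ hu⟩

/-- with unknown positive coupling weights and Bob's control
input unobserved, every candidate initial state whose first message residual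
has the sign of u⁽⁰⁾ is consistent with all of Alice's observations; hence the
set of consistent initial states of Bob is infinite and Bob's initial state
cannot be determined by Alice. -/
theorem stmt_15 (γ₁ γ₂ : ℝ) (hγ₂ : 0 < γ₂) (hγ₁ : 0 ≤ γ₁) (K : ℕ)
    (pA vA u : ℕ → ℝ) (hu : ∀ k ≤ K, u k ≠ 0) :
    (∀ pB0 vB0 : ℝ,
      (γ₁ * (pB0 - pA 0) + γ₂ * (vB0 - vA 0)) * u 0 > 0 →
      ∃ w pB vB a : ℕ → ℝ,
        pB 0 = pB0 ∧ vB 0 = vB0 ∧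
        (∀ k, pB (k + 1) = pB k + vB k) ∧
        (∀ k, vB (k + 1) = vB k + w k) ∧
        (∀ k ≤ K, 0 < a k) ∧
        (∀ k ≤ K, u k = γ₁ * a k * (pB k - pA k) + γ₂ * a k * (vB k - vA k)))
    ∧ Set.Infinite {x : ℝ × ℝ |
        ∃ w pB vB a : ℕ → ℝ,
          pB 0 = x.1 ∧ vB 0 = x.2 ∧
          (∀ k, pB (k + 1) = pB k + vB k) ∧
          (∀ k, vB (k + 1) = vB k + w k) ∧
          (∀ k ≤ K, 0 < a k) ∧
          (∀ k ≤ K, u k = γ₁ * a k * (pB k - pA k) + γ₂ * a k * (vB k - vA k))} :=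
  stmt_15_general γ₁ γ₂ hγ₂ K pA vA u hu
end

section
/- Let u : ℕ → ℝ and v_B : ℕ → ℝ satisfy v_B^{(k+1)} = v_B^{(k)} − u^{(k)} for all k, let k_c ∈ ℕ and let v_A^{(k_c)} ∈ ℝ be such that v_B^{(k_c)} = v_A^{(k_c)}. Then for every k ≤ k_c, v_B^{(k)} = v_A^{(k_c)} + ∑_{i=k}^{k_c−1} u^{(i)}. Consequently, if Alice is Bob's sole neighbor in an undirected network, then once consensus is reached at time k_c, Alice can compute Bob's entire past velocity trajectory from the messages u^{(i)} = u_{AB}^{(i)} she received, regardless of the encryption scheme used. -/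
/-- if Alice is Bob's sole neighbor, Bob's velocity obeys
v_B^{(k+1)} = v_B^{(k)} - u^{(k)} with u^{(k)} known to Alice, so once
consensus v_B^{(k_c)} = v_A^{(k_c)} is reached, the whole past velocity
trajectory is v_B^{(k)} = v_A^{(k_c)} + ∑_{i=k}^{k_c-1} u^{(i)}. -/
theorem stmt_16 (u vB : ℕ → ℝ)
    (hrec : ∀ k, vB (k + 1) = vB k - u k)
    (kc : ℕ) (vAkc : ℝ) (hcons : vB kc = vAkc) :
    ∀ k ≤ kc, vB k = vAkc + ∑ i ∈ Finset.Ico k kc, u i := by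
  have key : ∀ d k, vB k = vB (k + d) + ∑ i ∈ Finset.Ico k (k + d), u i := by
    intro d
    induction d with
    | zero => intro k; simp
    | succ n ih =>
      intro k
      have h1 := ih (k + 1)
      have h2 := hrec k
      have : vB k = vB (k + 1) + u k := by linarith
      rw [this, h1, Finset.sum_eq_sum_Ico_succ_bot (by omega : k < k + (n + 1)),
        show k + (n + 1) = k + 1 + n by ring]
      ring
  intro k hk
  obtain ⟨d, rfl⟩ := Nat.exists_eq_add_of_le hk
  rw [key d k, hcons]
end
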